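/- arXiv:2303.00771 — 11 statements merged into one kernel-verified Lean document; each statement's English description precedes it below -/
import Mathlib

section
/- For every rational number r with 0 < r < 1 there exists exactly one pair of rational numbers (p, q) with 0 ≤ p < q ≤ 1 such that p and q are compatible and the Farey sum of p and q equals r; that is, |p.num * q.den − q.num * p.den| = 1 and r = (p.num + q.num)/(p.den + q.den). (In the Farey tree, every vertex r ∈ ℚ ∩ (0,1) has a unique pair of parents.) -/
/-!
Write `r = a / b` in lowest terms. For a compatible pair `p = c / d < q = e / f` with mediant `r`
we have `e d - c f = 1`, so `(c + e) / (d + f)` is already reduced: `a = c + e`, `b = d + f`, and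
hence `a d - b c = 1` with `0 < d < b`. Thus `d` is the inverse of `a` modulo `b` taken in
`(0, b)`, which exists and is unique, and `d` determines `c`, `e` and `f`.
-/

/-- Rationals `p, q` (in reduced form) are compatible if `|p.num * q.den - q.num * p.den| = 1`. -/
def FareyCompatible (p q : ℚ) : Prop :=
  |p.num * (q.den : ℤ) - q.num * (p.den : ℤ)| = 1

/-- The Farey sum (mediant) of two rationals, as a rational number. -/
def fareySum (p q : ℚ) : ℚ :=
  ((p.num : ℚ) + (q.num : ℚ)) / ((p.den : ℚ) + (q.den : ℚ))

namespace Int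

theorem exists_mul_sub_mul_eq_one {a b : ℤ} (h : IsCoprime a b) (hb : 0 < b) :
    ∃ d c, 0 ≤ d ∧ d < b ∧ a * d - b * c = 1 := by
  obtain ⟨u, v, huv⟩ := h
  exact ⟨u % b, -v - a * (u / b), emod_nonneg u hb.ne', emod_lt_of_pos u hb,
    by linear_combination huv + a * emod_add_mul_ediv u b⟩

theorem eq_of_mul_sub_mul_eq_one {a b c d c' d' : ℤ} (h : a * d - b * c = 1)
    (h' : a * d' - b * c' = 1) (hd : 0 ≤ d) (hdb : d < b) (hd' : 0 ≤ d') (hdb' : d' < b) :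
    d = d' ∧ c = c' := by
  have hba : IsCoprime b a := ⟨-c, d, by linear_combination h⟩
  have hdvd : b ∣ d - d' := hba.dvd_of_dvd_mul_left ⟨c - c', by linear_combination h - h'⟩
  obtain rfl : d = d' := by
    have := eq_zero_of_abs_lt_dvd hdvd (abs_sub_lt_iff.mpr ⟨by omega, by omega⟩)
    omega
  exact ⟨rfl, mul_left_cancel₀ (by omega : b ≠ 0) (by linarith)⟩

end Int

namespace Rat

theorem num_div_of_isCoprime {c d : ℤ} (hd : 0 < d) (h : IsCoprime c d) :
    ((c / d : ℚ)).num = c :=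
  num_div_eq_of_coprime hd (Int.isCoprime_iff_gcd_eq_one.mp h)

theorem den_div_of_isCoprime {c d : ℤ} (hd : 0 < d) (h : IsCoprime c d) :
    (((c / d : ℚ)).den : ℤ) = d :=
  den_div_eq_of_coprime hd (Int.isCoprime_iff_gcd_eq_one.mp h)

end Rat

theorem fareyCompatible_and_lt_iff {p q : ℚ} :
    FareyCompatible p q ∧ p < q ↔ q.num * p.den - p.num * q.den = 1 := by
  rw [FareyCompatible, Rat.lt_iff, abs_eq zero_le_one]
  constructor
  · rintro ⟨h | h, hlt⟩ <;> linarith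
  · intro h
    exact ⟨Or.inr (by linarith), by linarith⟩

theorem fareySum_num_den_of_det {p q : ℚ} (h : q.num * p.den - p.num * q.den = 1) :
    (fareySum p q).num = p.num + q.num ∧ ((fareySum p q).den : ℤ) = p.den + q.den := by
  have hsum : fareySum p q = ((p.num + q.num : ℤ) : ℚ) / ((p.den + q.den : ℤ) : ℚ) := by
    rw [fareySum]; push_cast; rfl
  have hcop : IsCoprime (p.num + q.num) (p.den + q.den) := ⟨p.den, -p.num, by linear_combination h⟩
  have hpos : (0 : ℤ) < p.den + q.den := by positivity
  rw [hsum]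
  exact ⟨Rat.num_div_of_isCoprime hpos hcop, Rat.den_div_of_isCoprime hpos hcop⟩

theorem eq_of_fareySum_eq {r p q p' q' : ℚ} (h : FareyCompatible p q ∧ p < q)
    (h' : FareyCompatible p' q' ∧ p' < q') (hr : r = fareySum p q) (hr' : r = fareySum p' q') :
    p = p' ∧ q = q' := by
  rw [fareyCompatible_and_lt_iff] at h h'
  obtain ⟨hnum, hden⟩ := fareySum_num_den_of_det h
  obtain ⟨hnum', hden'⟩ := fareySum_num_den_of_det h'
  rw [← hr] at hnum hden
  rw [← hr'] at hnum' hden'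
  have hq := q.den_pos
  have hq' := q'.den_pos
  obtain ⟨hpden, hpnum⟩ := Int.eq_of_mul_sub_mul_eq_one (a := r.num) (b := r.den)
    (c := p.num) (d := p.den) (c' := p'.num) (d' := p'.den)
    (by rw [hnum, hden]; linear_combination h) (by rw [hnum', hden']; linear_combination h')
    (by positivity) (by omega) (by positivity) (by omega)
  exact ⟨Rat.ext hpnum (by exact_mod_cast hpden), Rat.ext (by omega) (by omega)⟩

theorem exists_fareySum_eq {r : ℚ} (h0 : 0 < r) (h1 : r < 1) :
    ∃ p q : ℚ, 0 ≤ p ∧ p < q ∧ q ≤ 1 ∧ FareyCompatible p q ∧ r = fareySum p q := by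
  set a := r.num
  set b := (r.den : ℤ)
  have ha : 0 < a := Rat.num_pos.mpr h0
  have hab : a < b := by exact_mod_cast Rat.num_lt_denom_iff.mpr h1
  have hcop : IsCoprime a b := Int.isCoprime_iff_gcd_eq_one.mpr r.reduced
  obtain ⟨d, c, hd_nonneg, hdb, hdet⟩ := Int.exists_mul_sub_mul_eq_one hcop (by omega)
  have hd : 0 < d := by
    refine lt_of_le_of_ne hd_nonneg fun hd0 => ?_
    have : b ≤ 1 := Int.le_of_dvd one_pos ⟨-c, by subst hd0; linarith⟩
    omega
  have hbd : 0 < b - d := by omega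
  have hcd : IsCoprime c d := ⟨-b, a, by linear_combination hdet⟩
  have hcd' : IsCoprime (a - c) (b - d) := ⟨d, -c, by linear_combination hdet⟩
  have hP := Rat.num_div_of_isCoprime hd hcd
  have hP' := Rat.den_div_of_isCoprime hd hcd
  have hQ := Rat.num_div_of_isCoprime hbd hcd'
  have hQ' := Rat.den_div_of_isCoprime hbd hcd'
  set P : ℚ := c / d
  set Q : ℚ := ((a - c : ℤ) : ℚ) / ((b - d : ℤ) : ℚ)
  have hPQ : Q.num * P.den - P.num * Q.den = 1 := by
    rw [hP, hP', hQ, hQ']; linear_combination hdet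
  have hc : 0 ≤ c := by nlinarith
  -- `b * ((b - d) - (a - c)) = (b - a) * (b - d) - 1`
  have hQ_le : a - c ≤ b - d := by nlinarith [mul_pos (sub_pos.mpr hab) hbd]
  obtain ⟨hcomp, hlt⟩ := fareyCompatible_and_lt_iff.mpr hPQ
  obtain ⟨hnum, hden⟩ := fareySum_num_den_of_det hPQ
  refine ⟨P, Q, ?_, hlt, ?_, hcomp, ?_⟩
  · rwa [← Rat.num_nonneg, hP]
  · rw [div_le_one (by exact_mod_cast hbd)]
    exact_mod_cast hQ_le
  · refine Rat.ext ?_ ?_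
    · rw [hnum, hP, hQ]; ring
    · have : ((fareySum P Q).den : ℤ) = r.den := by rw [hden, hP', hQ']; ring
      exact_mod_cast this.symm

/-- Every rational `r` with `0 < r < 1` is the Farey sum of a unique compatible pair
`(p, q)` with `0 ≤ p < q ≤ 1`: in the Farey tree, every vertex has a unique pair of
parents. -/
theorem farey_parents_exists_unique (r : ℚ) (h0 : 0 < r) (h1 : r < 1) :
    ∃! pq : ℚ × ℚ, 0 ≤ pq.1 ∧ pq.1 < pq.2 ∧ pq.2 ≤ 1 ∧
      FareyCompatible pq.1 pq.2 ∧ r = fareySum pq.1 pq.2 := by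
  obtain ⟨p, q, hp, hlt, hq, hcomp, hr⟩ := exists_fareySum_eq h0 h1
  refine ⟨(p, q), ⟨hp, hlt, hq, hcomp, hr⟩, ?_⟩
  rintro ⟨p', q'⟩ ⟨-, hlt', -, hcomp', hr'⟩
  obtain ⟨rfl, rfl⟩ := eq_of_fareySum_eq ⟨hcomp', hlt'⟩ ⟨hcomp, hlt⟩ hr' hr
  rfl
end

section
/- Let p and q be compatible rational numbers with 0 ≤ p < q ≤ 1, and let r be any rational number with p < r < q. Then the reduced denominator of r satisfies r.den ≥ p.den + q.den; in particular, the denominator of r is at least the denominator of the mediant p ⊕ q. -/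
/-!
If `a/b < x/y < c/d` with `bc - ad = 1`, then `y = b (cy - dx) + d (bx - ay)`, and both
brackets are positive integers, so `y ≥ b + d`.
-/

theorem add_le_of_between_of_det_eq_one {a b c d x y : ℤ} (hb : 0 ≤ b) (hd : 0 ≤ d)
    (hdet : b * c - a * d = 1) (hleft : a * y < x * b) (hright : x * d < c * y) :
    b + d ≤ y := by
  have hy : y = b * (c * y - x * d) + d * (x * b - a * y) := by
    linear_combination (-y) * hdet
  have hcy : 1 ≤ c * y - x * d := by omega
  have hxb : 1 ≤ x * b - a * y := by omega
  calc b + d = b * 1 + d * 1 := by ring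
    _ ≤ b * (c * y - x * d) + d * (x * b - a * y) := by gcongr
    _ = y := hy.symm

theorem FareyCompatible.det_eq_one {p q : ℚ} (h : FareyCompatible p q) (hpq : p < q) :
    (p.den : ℤ) * q.num - p.num * q.den = 1 := by
  have hlt : p.num * q.den < q.num * p.den := (Rat.lt_iff p q).mp hpq
  rw [FareyCompatible, abs_of_neg (by omega)] at h
  linarith

theorem denom_ge_of_between_general (p q r : ℚ) (hpq : p < q)
    (hcompat : FareyCompatible p q) (hpr : p < r) (hrq : r < q) :
    p.den + q.den ≤ r.den := by
  have key : (p.den : ℤ) + q.den ≤ r.den :=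
    add_le_of_between_of_det_eq_one (by positivity) (by positivity)
      (hcompat.det_eq_one hpq) ((Rat.lt_iff p r).mp hpr) ((Rat.lt_iff r q).mp hrq)
  exact_mod_cast key

/-- Any rational strictly between two compatible rationals `p < q` has reduced
denominator at least `p.den + q.den`, the denominator of their mediant. -/
theorem denom_ge_of_between (p q r : ℚ) (hp : 0 ≤ p) (hpq : p < q) (hq : q ≤ 1)
    (hcompat : FareyCompatible p q) (hpr : p < r) (hrq : r < q) :
    p.den + q.den ≤ r.den :=
  denom_ge_of_between_general p q r hpq hcompat hpr hrq
end

section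
/- Fix integers n ≥ 3 and 2 ≤ k ≤ n−1. Define σ : {1, …, n} → {1, …, n} by σ(1) = n, σ(i) = i + (n−k) for 2 ≤ i ≤ k−1, and σ(i) = i − (k−1) for k ≤ i ≤ n. Then σ is a bijection of {1, …, n}, and the permutation σ is a single n-cycle (equivalently, every orbit of σ is all of {1, …, n}) if and only if gcd(n−k, n−1) = 1. -/
/-!
On the points `2, …, n` the map `σ` is the rotation `x ↦ x + (n - k)` of a circle with `n - 1`
positions, except that the step from `k` to `σ² k = n` is taken in two moves, through the extra
point `σ k = 1`. Inserting one point into a single step of an orbit changes which points lie on a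
common orbit only by that point, so `σ` is an `n`-cycle exactly when the rotation by `n - k` of
`ℤ/(n - 1)` is transitive, i.e. when `n - k` and `n - 1` are coprime.
-/

open Function

section Reaches

variable {α : Type*}

def Reaches (f : α → α) (x y : α) : Prop :=
  ∃ j, f^[j] x = y

variable {f : α → α} {x y z : α}

theorem Reaches.refl (f : α → α) (x : α) : Reaches f x x :=
  ⟨0, rfl⟩

theorem Reaches.step (f : α → α) (x : α) : Reaches f x (f x) :=
  ⟨1, rfl⟩

theorem Reaches.trans : Reaches f x y → Reaches f y z → Reaches f x z
  | ⟨i, hi⟩, ⟨j, hj⟩ => ⟨j + i, by rw [iterate_add_apply, hi, hj]⟩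

@[elab_as_elim]
theorem Reaches.induction (h : Reaches f x y) {P : α → Prop} (hx : P x)
    (hstep : ∀ z, P z → P (f z)) : P y := by
  obtain ⟨j, rfl⟩ := h
  induction j with
  | zero => exact hx
  | succ j ih => rw [iterate_succ_apply']; exact hstep _ ih

def bypass [DecidableEq α] (f : α → α) (k : α) : α → α :=
  update f k (f (f k))

variable [DecidableEq α] {k : α}

theorem reaches_bypass_apply (f : α → α) (k z : α) : Reaches f z (bypass f k z) := by
  by_cases hz : z = k
  · subst hz
    exact ⟨2, by simp [bypass]⟩
  · rw [bypass, update_of_ne hz]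
    exact Reaches.step f z

theorem Reaches.of_bypass (h : Reaches (bypass f k) x y) : Reaches f x y :=
  h.induction (Reaches.refl f x) fun z hz => hz.trans (reaches_bypass_apply f k z)

theorem Reaches.bypass_or_eq (h : Reaches f x y) : Reaches (bypass f k) x y ∨ y = f k := by
  suffices Reaches (bypass f k) x y ∨ (y = f k ∧ Reaches (bypass f k) x k) from
    this.imp_right And.left
  refine h.induction (Or.inl (Reaches.refl _ x)) ?_
  rintro z (hz | ⟨rfl, hk⟩)
  · by_cases hzk : z = k
    · subst hzk
      exact Or.inr ⟨rfl, hz⟩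
    · left
      simpa [bypass, update_of_ne hzk] using hz.trans (Reaches.step _ z)
  · left
    simpa [bypass] using hk.trans (Reaches.step _ k)

end Reaches

section Rotation

variable {g : ℕ → ℕ} {c m d : ℕ}

theorem iterate_eq_of_rotate (hg : ∀ x, c ≤ x → x < c + m → g x = (x - c + d) % m + c)
    {x : ℕ} (hcx : c ≤ x) (hxm : x < c + m) (j : ℕ) :
    g^[j] x = (x - c + j * d) % m + c := by
  induction j with
  | zero => rw [iterate_zero_apply, Nat.mod_eq_of_lt (by omega)]; omega
  | succ j ih =>
    have hlt : (x - c + j * d) % m < m := Nat.mod_lt _ (by omega)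
    rw [iterate_succ_apply', ih, hg _ (by omega) (by omega), Nat.add_sub_cancel, Nat.mod_add_mod,
      add_assoc, ← Nat.succ_mul]

theorem Nat.Coprime.exists_add_mul_mod_eq (h : d.Coprime m) (r : ℕ) {s : ℕ} (hs : s < m) :
    ∃ j, (r + j * d) % m = s := by
  have : NeZero m := ⟨by omega⟩
  refine ⟨((s - r : ZMod m) * (d : ZMod m)⁻¹).val, ?_⟩
  suffices ((r + ((s - r : ZMod m) * (d : ZMod m)⁻¹).val * d : ℕ) : ZMod m) = s by
    rw [← ZMod.val_natCast, this, ZMod.val_cast_of_lt hs]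
  push_cast
  rw [ZMod.natCast_zmod_val, mul_assoc, mul_comm _ (d : ZMod m), ZMod.coe_mul_inv_eq_one d h]
  ring

theorem reaches_of_rotate_of_coprime (hg : ∀ x, c ≤ x → x < c + m → g x = (x - c + d) % m + c)
    (h : d.Coprime m) {x y : ℕ} (hcx : c ≤ x) (hxm : x < c + m) (hcy : c ≤ y) (hym : y < c + m) :
    Reaches g x y := by
  obtain ⟨j, hj⟩ := h.exists_add_mul_mod_eq (x - c) (show y - c < m by omega)
  exact ⟨j, by rw [iterate_eq_of_rotate hg hcx hxm, hj]; omega⟩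

theorem coprime_of_reaches_rotate (hg : ∀ x, c ≤ x → x < c + m → g x = (x - c + d) % m + c)
    (hm : 2 ≤ m) (h : Reaches g c (c + 1)) : d.Coprime m := by
  obtain ⟨j, hj⟩ := h
  rw [iterate_eq_of_rotate hg le_rfl (by omega), Nat.sub_self, zero_add] at hj
  refine Nat.coprime_of_mul_modEq_one j ?_
  rw [Nat.ModEq, mul_comm, Nat.one_mod_eq_one.mpr (by omega)]
  omega

end Rotation

section RhoE

variable {n k : ℕ} {σ : ℕ → ℕ}

theorem bypass_rhoE_eq_rotate (hk2 : 2 ≤ k) (hkn : k ≤ n - 1) (hσ1 : σ 1 = n)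
    (hσmid : ∀ i, 2 ≤ i → i ≤ k - 1 → σ i = i + (n - k))
    (hσtop : ∀ i, k ≤ i → i ≤ n → σ i = i - (k - 1)) (x : ℕ) (h2x : 2 ≤ x) (hxn : x < 2 + (n - 1)) :
    bypass σ k x = (x - 2 + (n - k)) % (n - 1) + 2 := by
  rcases lt_trichotomy x k with hxk | rfl | hxk
  · rw [bypass, update_of_ne hxk.ne, hσmid x h2x (by omega), Nat.mod_eq_of_lt (by omega)]
    omega
  · rw [bypass, update_self, hσtop x le_rfl (by omega), show x - (x - 1) = 1 by omega, hσ1,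
      Nat.mod_eq_of_lt (by omega)]
    omega
  · rw [bypass, update_of_ne hxk.ne', hσtop x hxk.le (by omega),
      Nat.mod_eq_sub_mod (by omega), Nat.mod_eq_of_lt (by omega)]
    omega

theorem bijOn_Icc_rhoE (hkn : k ≤ n - 1) (hσ1 : σ 1 = n)
    (hσmid : ∀ i, 2 ≤ i → i ≤ k - 1 → σ i = i + (n - k))
    (hσtop : ∀ i, k ≤ i → i ≤ n → σ i = i - (k - 1)) :
    Set.BijOn σ (Set.Icc 1 n) (Set.Icc 1 n) := by
  have hmaps : Set.MapsTo σ (Set.Icc 1 n) (Set.Icc 1 n) := by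
    rintro x ⟨h1x, hxn⟩
    rcases (by omega : x = 1 ∨ 2 ≤ x ∧ x ≤ k - 1 ∨ k ≤ x) with rfl | hx | hx
    · rw [hσ1]; exact ⟨by omega, le_rfl⟩
    · rw [hσmid x hx.1 hx.2]; exact ⟨by omega, by omega⟩
    · rw [hσtop x hx hxn]; exact ⟨by omega, by omega⟩
  refine (Set.finite_Icc 1 n).surjOn_iff_bijOn_of_mapsTo hmaps |>.mp ?_
  rintro y ⟨h1y, hyn⟩
  rcases (by omega : y = n ∨ n - k + 2 ≤ y ∧ y < n ∨ y ≤ n - k + 1) with rfl | hy | hy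
  · exact ⟨1, ⟨le_rfl, by omega⟩, hσ1⟩
  · refine ⟨y - (n - k), ⟨by omega, by omega⟩, ?_⟩
    rw [hσmid _ (by omega) (by omega)]; omega
  · refine ⟨y + (k - 1), ⟨by omega, by omega⟩, ?_⟩
    rw [hσtop _ (by omega) (by omega)]; omega

end RhoE

theorem rho_e_bijective_and_cycle_iff_general (n k : ℕ) (hk2 : 2 ≤ k)
    (hkn : k ≤ n - 1) (σ : ℕ → ℕ)
    (hσ1 : σ 1 = n)
    (hσmid : ∀ i, 2 ≤ i → i ≤ k - 1 → σ i = i + (n - k))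
    (hσtop : ∀ i, k ≤ i → i ≤ n → σ i = i - (k - 1)) :
    Set.BijOn σ (Set.Icc 1 n) (Set.Icc 1 n) ∧
      ((∀ x ∈ Set.Icc 1 n, ∀ y ∈ Set.Icc 1 n, ∃ j : ℕ, σ^[j] x = y) ↔
        Nat.gcd (n - k) (n - 1) = 1) := by
  have hrot := bypass_rhoE_eq_rotate hk2 hkn hσ1 hσmid hσtop
  have hσk : σ k = 1 := by rw [hσtop k le_rfl (by omega)]; omega
  refine ⟨bijOn_Icc_rhoE hkn hσ1 hσmid hσtop, fun h => ?_, fun h => ?_⟩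
  · obtain ⟨j, hj⟩ := h 2 ⟨by omega, by omega⟩ 3 ⟨by omega, by omega⟩
    exact coprime_of_reaches_rotate hrot (by omega)
      ((Reaches.bypass_or_eq (k := k) (⟨j, hj⟩ : Reaches σ 2 3)).resolve_right (by omega))
  · have hreach : ∀ x ∈ Set.Icc 2 n, ∀ y ∈ Set.Icc 2 n, Reaches σ x y := by
      rintro x ⟨h2x, hxn⟩ y ⟨h2y, hyn⟩
      exact (reaches_of_rotate_of_coprime hrot h h2x (by omega) h2y (by omega)).of_bypass
    have hto : ∀ x ∈ Set.Icc 1 n, Reaches σ x n := by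
      rintro x ⟨h1x, hxn⟩
      rcases h1x.eq_or_lt with rfl | h2x
      · exact ⟨1, hσ1⟩
      · exact hreach x ⟨h2x, hxn⟩ n ⟨by omega, le_rfl⟩
    have hfrom : ∀ y ∈ Set.Icc 1 n, Reaches σ n y := by
      rintro y ⟨h1y, hyn⟩
      rcases h1y.eq_or_lt with rfl | h2y
      · exact hσk ▸ (hreach n ⟨by omega, le_rfl⟩ k ⟨hk2, by omega⟩).trans (Reaches.step σ k)
      · exact hreach n ⟨by omega, le_rfl⟩ y ⟨h2y, hyn⟩
    exact fun x hx y hy => (hto x hx).trans (hfrom y hy)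

/-- The permutation `ρ_e(n,k)` of `{1, …, n}` defined by `σ(1) = n`,
`σ(i) = i + (n-k)` for `2 ≤ i ≤ k-1`, and `σ(i) = i - (k-1)` for `k ≤ i ≤ n`
is a bijection of `{1, …, n}`, and it is a single `n`-cycle (every forward orbit
hits every point) if and only if `gcd(n-k, n-1) = 1`. -/
theorem rho_e_bijective_and_cycle_iff (n k : ℕ) (hn : 3 ≤ n) (hk2 : 2 ≤ k)
    (hkn : k ≤ n - 1) (σ : ℕ → ℕ)
    (hσ1 : σ 1 = n)
    (hσmid : ∀ i, 2 ≤ i → i ≤ k - 1 → σ i = i + (n - k))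
    (hσtop : ∀ i, k ≤ i → i ≤ n → σ i = i - (k - 1)) :
    Set.BijOn σ (Set.Icc 1 n) (Set.Icc 1 n) ∧
      ((∀ x ∈ Set.Icc 1 n, ∀ y ∈ Set.Icc 1 n, ∃ j : ℕ, σ^[j] x = y) ↔
        Nat.gcd (n - k) (n - 1) = 1) :=
  rho_e_bijective_and_cycle_iff_general n k hk2 hkn σ hσ1 hσmid hσtop
end

section
/- Let a, b be coprime integers with 1 ≤ a < b, and let i be an integer with 1 ≤ i ≤ b. Then there exists an integer k with a*(i−1) ≤ k*b ≤ a*i if and only if there exists an integer k with a*(b−i) ≤ k*b ≤ a*(b+1−i). Consequently, the digit-polynomial coefficients satisfy the palindromic symmetry c_i = c_{b+1−i} for 1 ≤ i ≤ b. -/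
/-- Palindromic symmetry of the digit-polynomial coefficients: for coprime `1 ≤ a < b`
and `1 ≤ i ≤ b`, the predicate `P(a,b,i)` (there is an integer `k` with
`a*(i-1) ≤ k*b ≤ a*i`) holds iff `P(a,b,b+1-i)` holds, i.e.
iff there is an integer `k` with `a*(b-i) ≤ k*b ≤ a*(b+1-i)`.
Consequently `c_i = c_{b+1-i}`. -/
theorem digit_coeff_palindrome (a b : ℤ) (ha : 1 ≤ a) (hab : a < b)
    (hcop : Int.gcd a b = 1) (i : ℤ) (hi1 : 1 ≤ i) (hib : i ≤ b) :
    (∃ k : ℤ, a * (i - 1) ≤ k * b ∧ k * b ≤ a * i) ↔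
      (∃ k : ℤ, a * (b - i) ≤ k * b ∧ k * b ≤ a * (b + 1 - i)) := by
  constructor
  · rintro ⟨k, h1, h2⟩
    exact ⟨a - k, by nlinarith, by nlinarith⟩
  · rintro ⟨k, h1, h2⟩
    exact ⟨a - k, by nlinarith, by nlinarith⟩
end

section
/- Let m ≥ 2 be an integer and let a, b be coprime integers with 1 ≤ a < b. Then the digit polynomial D_{a/b}(t) = t^{b+1} + 1 − Σ_{i=1}^{b} c_i·t^{b+1−i} is reciprocal: D_{a/b}(t) = t^{b+1} · D_{a/b}(1/t); equivalently, the reversal of the coefficient sequence of D_{a/b} (Polynomial.reverse) equals D_{a/b} itself. -/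
open Polynomial

/-- The `i`-th digit-polynomial coefficient: `m` if there is an integer `k` with
`a*(i-1) ≤ k*b ≤ a*i`, and `m-2` otherwise. -/
noncomputable def digitCoeff (m : ℤ) (a b : ℕ) (i : ℕ) : ℤ :=
  open Classical in
  if ∃ k : ℤ, (a : ℤ) * ((i : ℤ) - 1) ≤ k * b ∧ k * b ≤ (a : ℤ) * i then m else m - 2

/-- The digit polynomial `D_{a/b}(t) = t^(b+1) + 1 - ∑_{i=1}^{b} c_i t^(b+1-i)`. -/
noncomputable def digitPoly (m : ℤ) (a b : ℕ) : Polynomial ℤ :=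
  X ^ (b + 1) + 1 - ∑ i ∈ Finset.Icc 1 b, C (digitCoeff m a b i) * X ^ (b + 1 - i)

/-!
The substitution `k ↦ a - k` maps the interval condition defining `c_i` onto the one defining
`c_{b+1-i}`, so the digit sequence `c_1, …, c_b` is a palindrome. Together with the outer
coefficients `1, 1` of `t^(b+1)` and `1`, this makes the whole coefficient sequence of `D_{a/b}`
a palindrome.
-/

namespace Polynomial

variable {R : Type*} [Semiring R]

theorem reflect_sum {ι : Type*} (N : ℕ) (s : Finset ι) (f : ι → R[X]) :
    reflect N (∑ i ∈ s, f i) = ∑ i ∈ s, reflect N (f i) :=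
  map_sum (⟨⟨reflect N, reflect_zero⟩, fun f g => reflect_add f g N⟩ : R[X] →+ R[X]) f s

theorem reflect_sum_Icc_C_mul_X_pow_of_palindrome (n : ℕ) (c : ℕ → R)
    (hc : ∀ i ∈ Finset.Icc 1 n, c (n + 1 - i) = c i) :
    reflect (n + 1) (∑ i ∈ Finset.Icc 1 n, C (c i) * X ^ (n + 1 - i)) =
      ∑ i ∈ Finset.Icc 1 n, C (c i) * X ^ (n + 1 - i) := by
  rw [reflect_sum]
  refine Finset.sum_nbij' (fun i => n + 1 - i) (fun i => n + 1 - i) ?_ ?_ ?_ ?_ ?_ <;>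
    intro i hi <;> simp only [Finset.mem_Icc] at hi ⊢
  · omega
  · omega
  · omega
  · omega
  · rw [reflect_C_mul_X_pow, revAt_le (by omega), hc i (Finset.mem_Icc.2 hi)]

theorem natDegree_sum_Icc_C_mul_X_pow_le (n : ℕ) (c : ℕ → R) :
    (∑ i ∈ Finset.Icc 1 n, C (c i) * X ^ (n + 1 - i)).natDegree ≤ n := by
  refine natDegree_sum_le_of_forall_le _ _ fun i hi => ?_
  refine (natDegree_C_mul_X_pow_le _ _).trans ?_
  have := (Finset.mem_Icc.1 hi).1
  omega

end Polynomial

theorem digitCoeff_palindrome (m : ℤ) (a b i : ℕ) (hi : i ≤ b + 1) :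
    digitCoeff m a b (b + 1 - i) = digitCoeff m a b i := by
  have hcast : ((b + 1 - i : ℕ) : ℤ) = b + 1 - i := by push_cast [hi]; ring
  unfold digitCoeff
  rw [hcast]
  congr 1
  refine propext ⟨fun ⟨k, hk⟩ => ⟨a - k, ?_, ?_⟩, fun ⟨k, hk⟩ => ⟨a - k, ?_, ?_⟩⟩ <;>
    nlinarith [hk.1, hk.2]

theorem natDegree_digitPoly (m : ℤ) (a b : ℕ) : (digitPoly m a b).natDegree = b + 1 := by
  have hlow : (1 - ∑ i ∈ Finset.Icc 1 b,
      C (digitCoeff m a b i) * X ^ (b + 1 - i) : ℤ[X]).natDegree ≤ b :=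
    (natDegree_sub_le _ _).trans
      (max_le (by simp) (natDegree_sum_Icc_C_mul_X_pow_le b (digitCoeff m a b)))
  rw [digitPoly, add_sub_assoc, natDegree_add_eq_left_of_natDegree_lt] <;>
    rw [natDegree_X_pow]
  omega

theorem digitPoly_reciprocal_general (m : ℤ) (a b : ℕ) :
    (digitPoly m a b).reverse = digitPoly m a b := by
  have hsum := reflect_sum_Icc_C_mul_X_pow_of_palindrome b (digitCoeff m a b)
    fun i hi => digitCoeff_palindrome m a b i ((Finset.mem_Icc.1 hi).2.trans b.le_succ)
  rw [reverse, natDegree_digitPoly, digitPoly, reflect_sub, reflect_add, hsum, reflect_one,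
    reflect_monomial, revAt_le le_rfl, Nat.sub_self, pow_zero, add_comm 1]

/-- The digit polynomial is reciprocal: its coefficient sequence is palindromic,
i.e. `Polynomial.reverse` fixes it. -/
theorem digitPoly_reciprocal (m : ℤ) (hm : 2 ≤ m) (a b : ℕ) (ha : 1 ≤ a) (hab : a < b)
    (hcop : Nat.Coprime a b) :
    (digitPoly m a b).reverse = digitPoly m a b :=
  digitPoly_reciprocal_general m a b
end

section
/- Let a, b, c, d be positive integers with a < b, c < d, and b*c − a*d = 1 (so a/b < c/d are compatible fractions in (0,1)), and let P(x, y, i) denote the predicate: there exists an integer k with x*(i−1) ≤ k*y ≤ x*i. Then: (i) for every integer i with 1 ≤ i ≤ b, P(a+c, b+d, i) holds if and only if P(a, b, i) holds; (ii) P(a+c, b+d, b+1) fails; (iii) for every integer j with 2 ≤ j ≤ d, P(a+c, b+d, b+j) holds if and only if P(c, d, j) holds. -/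
private lemma step_ge (y t X : ℤ) (hy : 0 < y) (h : y * (t - 1) < y * X) : t ≤ X := by
  have h2 := (mul_lt_mul_iff_right₀ hy).mp h
  omega

private lemma step_le (y t X : ℤ) (hy : 0 < y) (h : y * X < y * (t + 1)) : X ≤ t := by
  have h2 := (mul_lt_mul_iff_right₀ hy).mp h
  omega

/-- Combinatorial form of the first kneading transformation law
`ν(f ⊕ g) = overline(ν(f)) · underline(ν(g))`. Here `P x y i` is the predicate
"there exists an integer `k` with `x*(i-1) ≤ k*y ≤ x*i`". -/
theorem kneading_transform_first (a b c d : ℕ) (ha : 0 < a) (hc : 0 < c)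
    (hab : a < b) (hcd : c < d) (hdet : (b : ℤ) * c - (a : ℤ) * d = 1)
    (P : ℕ → ℕ → ℕ → Prop)
    (hP : ∀ x y i, P x y i ↔
      ∃ k : ℤ, (x : ℤ) * ((i : ℤ) - 1) ≤ k * y ∧ k * y ≤ (x : ℤ) * i) :
    (∀ i : ℕ, 1 ≤ i → i ≤ b → (P (a + c) (b + d) i ↔ P a b i)) ∧
      ¬ P (a + c) (b + d) (b + 1) ∧
      (∀ j : ℕ, 2 ≤ j → j ≤ d → (P (a + c) (b + d) (b + j) ↔ P c d j)) := by
  have hA : (1:ℤ) ≤ a := by exact_mod_cast ha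
  have hC : (1:ℤ) ≤ c := by exact_mod_cast hc
  have hAB : (a:ℤ) < b := by exact_mod_cast hab
  have hCD : (c:ℤ) < d := by exact_mod_cast hcd
  have hB : (0:ℤ) < b := by linarith
  have hD : (0:ℤ) < d := by linarith
  refine ⟨?_, ?_, ?_⟩
  · -- part (i)
    intro i hi1 hib
    rw [hP, hP]
    push_cast
    have hI : (1:ℤ) ≤ i := by exact_mod_cast hi1
    have hIB : (i:ℤ) ≤ b := by exact_mod_cast hib
    have e : ((b:ℤ)*c - a*d) * ((i:ℤ)-1) = 1 * ((i:ℤ)-1) := by rw [hdet]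
    have e' : ((b:ℤ)*c - a*d) * (i:ℤ) = 1 * (i:ℤ) := by rw [hdet]
    constructor
    · rintro ⟨k, h1, h2⟩
      refine ⟨k, ?_, ?_⟩
      · -- a*(i-1) ≤ k*b
        by_contra hcon
        push_neg at hcon
        have hk : k * (b:ℤ) ≤ (a:ℤ) * ((i:ℤ)-1) - 1 := by
          linarith [Int.add_one_le_iff.mpr hcon]
        have hm := mul_le_mul_of_nonneg_left hk hD.le
        have hkd : k * (d:ℤ) ≤ (c:ℤ) * ((i:ℤ)-1) - 1 :=
          step_le b ((c:ℤ) * ((i:ℤ)-1) - 1) (k * d) hB (by linarith [e])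
        linarith [h1]
      · -- k*(b+d) ≤ (a+c)*i
        by_contra hcon
        push_neg at hcon
        have hk : (a:ℤ) * i + 1 ≤ k * b := by
          by_contra hk2
          push_neg at hk2
          have hk3 : k * (b:ℤ) ≤ (a:ℤ) * i := by linarith [Int.add_one_le_iff.mpr hk2]
          have hm := mul_le_mul_of_nonneg_left hk3 hD.le
          have hkd : k * (d:ℤ) ≤ (c:ℤ) * i :=
            step_le b ((c:ℤ) * i) (k * d) hB (by linarith [e'])
          linarith [h2]
        have hm := mul_le_mul_of_nonneg_left hk hD.le
        have hkd : (c:ℤ) * i ≤ k * d :=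
          step_ge b ((c:ℤ) * i) (k * d) hB (by linarith [e'])
        linarith [h2]
    · rintro ⟨k, h1, h2⟩
      have hm1 := mul_le_mul_of_nonneg_left h1 hD.le
      have hm2 := mul_le_mul_of_nonneg_left h2 hD.le
      have hkd1 : (c:ℤ) * ((i:ℤ)-1) ≤ k * d :=
        step_ge b ((c:ℤ) * ((i:ℤ)-1)) (k * d) hB (by linarith [e])
      have hkd2 : k * (d:ℤ) ≤ (c:ℤ) * i :=
        step_le b ((c:ℤ) * i) (k * d) hB (by linarith [e'])
      exact ⟨k, by linarith, by linarith⟩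
  · -- part (ii)
    rw [hP]
    push_cast
    rintro ⟨k, h1, h2⟩
    have hk : (a:ℤ) + 1 ≤ k :=
      step_ge ((b:ℤ) + d) ((a:ℤ) + 1) k (by linarith) (by linarith [h1])
    have hm := mul_le_mul_of_nonneg_right hk (by linarith : (0:ℤ) ≤ (b:ℤ) + d)
    linarith [h2]
  · -- part (iii)
    intro j hj2 hjd
    rw [hP, hP]
    push_cast
    have hJ : (2:ℤ) ≤ j := by exact_mod_cast hj2
    have hJD : (j:ℤ) ≤ d := by exact_mod_cast hjd
    have e : ((b:ℤ)*c - a*d) * ((j:ℤ)-1) = 1 * ((j:ℤ)-1) := by rw [hdet]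
    have e' : ((b:ℤ)*c - a*d) * (j:ℤ) = 1 * (j:ℤ) := by rw [hdet]
    constructor
    · rintro ⟨k, h1, h2⟩
      -- shifted bounds for k' = k - a
      have h1' : ((a:ℤ)+c) * ((j:ℤ)-1) + 1 ≤ (k - a) * ((b:ℤ) + d) := by linarith [h1]
      have h2' : (k - (a:ℤ)) * ((b:ℤ) + d) ≤ ((a:ℤ)+c) * j + 1 := by linarith [h2]
      refine ⟨k - a, ?_, ?_⟩
      · by_contra hcon
        push_neg at hcon
        have hk : (k - (a:ℤ)) * d ≤ (c:ℤ) * ((j:ℤ)-1) - 1 := by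
          linarith [Int.add_one_le_iff.mpr hcon]
        have hm := mul_le_mul_of_nonneg_left hk hB.le
        have hkb : (k - (a:ℤ)) * b ≤ (a:ℤ) * ((j:ℤ)-1) :=
          step_le d ((a:ℤ) * ((j:ℤ)-1)) ((k - a) * b) hD (by linarith [e])
        linarith [h1']
      · by_contra hcon
        push_neg at hcon
        have hk : (c:ℤ) * j + 1 ≤ (k - (a:ℤ)) * d := by
          linarith [Int.add_one_le_iff.mpr hcon]
        have hm := mul_le_mul_of_nonneg_left hk hB.le
        have hkb : (a:ℤ) * j + 1 ≤ (k - (a:ℤ)) * b :=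
          step_ge d ((a:ℤ) * j + 1) ((k - a) * b) hD (by linarith [e'])
        linarith [h2']
    · rintro ⟨k, h1, h2⟩
      have hm1 := mul_le_mul_of_nonneg_left h1 hB.le
      have hm2 := mul_le_mul_of_nonneg_left h2 hB.le
      have hkb1 : (a:ℤ) * ((j:ℤ)-1) + 1 ≤ k * b :=
        step_ge d ((a:ℤ) * ((j:ℤ)-1) + 1) (k * b) hD (by linarith [e])
      have hkb2 : k * (b:ℤ) ≤ (a:ℤ) * j + 1 :=
        step_le d ((a:ℤ) * j + 1) (k * b) hD (by linarith [e'])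
      exact ⟨k + a, by linarith, by linarith⟩
end

section
/- Let a, b, c, d be positive integers with a < b, c < d, and b*c − a*d = 1 (so a/b < c/d are compatible fractions in (0,1)), and let P(x, y, i) denote the predicate: there exists an integer k with x*(i−1) ≤ k*y ≤ x*i. Then: (i) for every integer i with 1 ≤ i ≤ d−1, P(a+c, b+d, i) holds if and only if P(c, d, i) holds; (ii) P(a+c, b+d, d) fails; (iii) for every integer i with 1 ≤ i ≤ b, P(a+c, b+d, d+i) holds if and only if P(a, b, i) holds. -/
set_option maxHeartbeats 800000 in
/-- Combinatorial form of the second kneading transformation law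
`ν(f ⊕ g) = hat(ν(g)) · ν(f)`. Here `P x y i` is the predicate
"there exists an integer `k` with `x*(i-1) ≤ k*y ≤ x*i`". -/
theorem kneading_transform_second (a b c d : ℕ) (ha : 0 < a) (hc : 0 < c)
    (hab : a < b) (hcd : c < d) (hdet : (b : ℤ) * c - (a : ℤ) * d = 1)
    (P : ℕ → ℕ → ℕ → Prop)
    (hP : ∀ x y i, P x y i ↔
      ∃ k : ℤ, (x : ℤ) * ((i : ℤ) - 1) ≤ k * y ∧ k * y ≤ (x : ℤ) * i) :
    (∀ i : ℕ, 1 ≤ i → i ≤ d - 1 → (P (a + c) (b + d) i ↔ P c d i)) ∧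
      ¬ P (a + c) (b + d) d ∧
      (∀ i : ℕ, 1 ≤ i → i ≤ b → (P (a + c) (b + d) (d + i) ↔ P a b i)) := by
  have ha' : (1:ℤ) ≤ (a:ℤ) := by exact_mod_cast ha
  have hc' : (1:ℤ) ≤ (c:ℤ) := by exact_mod_cast hc
  have hab' : (a:ℤ) + 1 ≤ (b:ℤ) := by exact_mod_cast hab
  have hcd' : (c:ℤ) + 1 ≤ (d:ℤ) := by exact_mod_cast hcd
  have hb' : (0:ℤ) < (b:ℤ) := by linarith
  have hd' : (0:ℤ) < (d:ℤ) := by linarith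
  have hB : (0:ℤ) < (b:ℤ) + (d:ℤ) := by linarith
  have hAd : (d:ℤ) * ((a:ℤ) + c) = (c:ℤ) * ((b:ℤ) + d) - 1 := by linear_combination -hdet
  have hAb : (b:ℤ) * ((a:ℤ) + c) = (a:ℤ) * ((b:ℤ) + d) + 1 := by linear_combination hdet
  refine ⟨?_, ?_, ?_⟩
  · -- part (i)
    intro i hi1 hi2
    have hi1' : (1:ℤ) ≤ (i:ℤ) := by exact_mod_cast hi1
    have hi2' : (i:ℤ) + 1 ≤ (d:ℤ) := by exact_mod_cast (by omega : i + 1 ≤ d)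
    rw [hP, hP]
    push_cast
    have key : ∀ k : ℤ, ((c:ℤ)*i - k*d) * ((b:ℤ)+d)
        = (i:ℤ) + (d:ℤ)*(((a:ℤ)+c)*(i:ℤ) - k*((b:ℤ)+d)) := by
      intro k; linear_combination (i:ℤ) * hdet
    constructor
    · rintro ⟨k, h1, h2⟩
      refine ⟨k, ?_, ?_⟩
      · -- t ≤ c
        by_contra h
        push_neg at h
        have h' : (c:ℤ)*((i:ℤ)-1) ≥ k*d + 1 := Int.lt_iff_add_one_le.mp h
        have ht : (c:ℤ) + 1 ≤ (c:ℤ)*i - k*d := by linarith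
        have h3 : ((c:ℤ)+1) * ((b:ℤ)+d) ≤ ((c:ℤ)*i - k*d) * ((b:ℤ)+d) :=
          mul_le_mul_of_nonneg_right ht hB.le
        have hs : ((a:ℤ)+c)*(i:ℤ) - k*((b:ℤ)+d) ≤ (a:ℤ)+c := by linarith
        have h4 : (d:ℤ) * (((a:ℤ)+c)*(i:ℤ) - k*((b:ℤ)+d)) ≤ (d:ℤ) * ((a:ℤ)+c) :=
          mul_le_mul_of_nonneg_left hs hd'.le
        linarith [key k]
      · -- t ≥ 0
        by_contra h
        push_neg at h
        have ht : (c:ℤ)*i - k*d ≤ -1 := by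
          have := Int.lt_iff_add_one_le.mp h; linarith
        have h3 : ((c:ℤ)*i - k*d) * ((b:ℤ)+d) ≤ (-1) * ((b:ℤ)+d) :=
          mul_le_mul_of_nonneg_right ht hB.le
        have hs : 0 ≤ (d:ℤ) * (((a:ℤ)+c)*(i:ℤ) - k*((b:ℤ)+d)) :=
          mul_nonneg hd'.le (by linarith)
        linarith [key k]
    · rintro ⟨k, h1, h2⟩
      have ht0 : (0:ℤ) ≤ (c:ℤ)*i - k*d := by linarith
      have htc : (c:ℤ)*i - k*d ≤ c := by linarith
      refine ⟨k, ?_, ?_⟩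
      · -- s ≤ a + c
        by_contra h
        push_neg at h
        have hs : ((a:ℤ)+c) + 1 ≤ ((a:ℤ)+c)*(i:ℤ) - k*((b:ℤ)+d) := by
          have := Int.lt_iff_add_one_le.mp h; linarith
        have h4 : (d:ℤ) * (((a:ℤ)+c)+1) ≤ (d:ℤ) * (((a:ℤ)+c)*(i:ℤ) - k*((b:ℤ)+d)) :=
          mul_le_mul_of_nonneg_left hs hd'.le
        have h3 : ((c:ℤ)*i - k*d) * ((b:ℤ)+d) ≤ (c:ℤ) * ((b:ℤ)+d) :=
          mul_le_mul_of_nonneg_right htc hB.le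
        linarith [key k]
      · -- s ≥ 0
        rcases eq_or_lt_of_le ht0 with h0 | hpos
        · -- t = 0 : impossible since then d ∣ i
          exfalso
          have ht : (c:ℤ)*i - k*d = 0 := h0.symm
          have hm : (i:ℤ) = (d:ℤ) * ((b:ℤ)*k - (a:ℤ)*i) := by
            linear_combination (b:ℤ)*ht - (i:ℤ)*hdet
          rcases le_or_gt 1 ((b:ℤ)*k - (a:ℤ)*i) with hm1 | hm1
          · have := mul_le_mul_of_nonneg_left hm1 hd'.le
            linarith
          · have hm2 : (b:ℤ)*k - (a:ℤ)*i ≤ 0 := by linarith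
            have := mul_nonpos_of_nonneg_of_nonpos hd'.le hm2
            linarith
        · have ht1 : (1:ℤ) ≤ (c:ℤ)*i - k*d := hpos
          have h3 : (1:ℤ) * ((b:ℤ)+d) ≤ ((c:ℤ)*i - k*d) * ((b:ℤ)+d) :=
            mul_le_mul_of_nonneg_right ht1 hB.le
          by_contra h
          push_neg at h
          have hs : ((a:ℤ)+c)*(i:ℤ) - k*((b:ℤ)+d) ≤ -1 := by
            have := Int.lt_iff_add_one_le.mp h; linarith
          have h4 : (d:ℤ) * (((a:ℤ)+c)*(i:ℤ) - k*((b:ℤ)+d)) ≤ (d:ℤ) * (-1) :=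
            mul_le_mul_of_nonneg_left hs hd'.le
          linarith [key k]
  · -- part (ii)
    rw [hP]
    push_cast
    rintro ⟨k, h1, h2⟩
    have h3 : k*((b:ℤ)+d) ≤ (c:ℤ)*((b:ℤ)+d) - 1 := by linarith
    have h4 : k ≤ (c:ℤ) - 1 := by
      by_contra h
      push_neg at h
      have hck : (c:ℤ) ≤ k := by
        have := Int.lt_iff_add_one_le.mp h; linarith
      have := mul_le_mul_of_nonneg_right hck hB.le
      linarith
    have h5 : k*((b:ℤ)+d) ≤ ((c:ℤ)-1)*((b:ℤ)+d) :=
      mul_le_mul_of_nonneg_right h4 hB.le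
    linarith
  · -- part (iii)
    intro i hi1 hi2
    have hi1' : (1:ℤ) ≤ (i:ℤ) := by exact_mod_cast hi1
    have hi2' : (i:ℤ) ≤ (b:ℤ) := by exact_mod_cast hi2
    rw [hP, hP]
    push_cast
    have key : ∀ k : ℤ, (b:ℤ)*(((a:ℤ)+c)*((d:ℤ)+(i:ℤ)) - (k+c)*((b:ℤ)+d))
        = ((a:ℤ)*(i:ℤ) - k*(b:ℤ))*((b:ℤ)+d) + (i:ℤ) - (b:ℤ) := by
      intro k; linear_combination ((i:ℤ) - (b:ℤ))*hdet
    constructor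
    · rintro ⟨k', h1, h2⟩
      have key' := key (k' - c)
      rw [sub_add_cancel] at key'
      refine ⟨k' - c, ?_, ?_⟩
      · -- t ≤ a
        by_contra h
        push_neg at h
        have ht : (a:ℤ) + 1 ≤ (a:ℤ)*(i:ℤ) - (k'-c)*(b:ℤ) := by
          have := Int.lt_iff_add_one_le.mp h; linarith
        have h3 : ((a:ℤ)+1)*((b:ℤ)+d) ≤ ((a:ℤ)*(i:ℤ) - (k'-c)*(b:ℤ))*((b:ℤ)+d) :=
          mul_le_mul_of_nonneg_right ht hB.le
        have hs : ((a:ℤ)+c)*((d:ℤ)+(i:ℤ)) - k'*((b:ℤ)+d) ≤ (a:ℤ)+c := by linarith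
        have h4 : (b:ℤ)*(((a:ℤ)+c)*((d:ℤ)+(i:ℤ)) - k'*((b:ℤ)+d)) ≤ (b:ℤ)*((a:ℤ)+c) :=
          mul_le_mul_of_nonneg_left hs hb'.le
        linarith [key']
      · -- t ≥ 0
        by_contra h
        push_neg at h
        have ht : (a:ℤ)*(i:ℤ) - (k'-c)*(b:ℤ) ≤ -1 := by
          have := Int.lt_iff_add_one_le.mp h; linarith
        have h3 : ((a:ℤ)*(i:ℤ) - (k'-c)*(b:ℤ))*((b:ℤ)+d) ≤ (-1)*((b:ℤ)+d) :=
          mul_le_mul_of_nonneg_right ht hB.le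
        have hs : 0 ≤ (b:ℤ)*(((a:ℤ)+c)*((d:ℤ)+(i:ℤ)) - k'*((b:ℤ)+d)) :=
          mul_nonneg hb'.le (by linarith)
        linarith [key']
    · rintro ⟨k, h1, h2⟩
      have ht0 : (0:ℤ) ≤ (a:ℤ)*(i:ℤ) - k*(b:ℤ) := by linarith
      have hta : (a:ℤ)*(i:ℤ) - k*(b:ℤ) ≤ a := by linarith
      refine ⟨k + c, ?_, ?_⟩
      · -- s ≤ a + c
        by_contra h
        push_neg at h
        have hs : ((a:ℤ)+c) + 1 ≤ ((a:ℤ)+c)*((d:ℤ)+(i:ℤ)) - (k+c)*((b:ℤ)+d) := by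
          have := Int.lt_iff_add_one_le.mp h; linarith
        have h4 : (b:ℤ)*(((a:ℤ)+c)+1) ≤ (b:ℤ)*(((a:ℤ)+c)*((d:ℤ)+(i:ℤ)) - (k+c)*((b:ℤ)+d)) :=
          mul_le_mul_of_nonneg_left hs hb'.le
        have h3 : ((a:ℤ)*(i:ℤ) - k*(b:ℤ))*((b:ℤ)+d) ≤ (a:ℤ)*((b:ℤ)+d) :=
          mul_le_mul_of_nonneg_right hta hB.le
        linarith [key k]
      · -- s ≥ 0
        rcases eq_or_lt_of_le ht0 with h0 | hpos
        · -- t = 0 : then b ∣ i, so i = b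
          have ht : (a:ℤ)*(i:ℤ) - k*(b:ℤ) = 0 := h0.symm
          have hm : (i:ℤ) = (b:ℤ) * ((c:ℤ)*(i:ℤ) - (d:ℤ)*k) := by
            linear_combination (-(d:ℤ))*ht - (i:ℤ)*hdet
          have hib : (b:ℤ) ≤ (i:ℤ) := by
            rcases le_or_gt 1 ((c:ℤ)*(i:ℤ) - (d:ℤ)*k) with hm1 | hm1
            · have := mul_le_mul_of_nonneg_left hm1 hb'.le
              linarith
            · have hm2 : (c:ℤ)*(i:ℤ) - (d:ℤ)*k ≤ 0 := by linarith
              have := mul_nonpos_of_nonneg_of_nonpos hb'.le hm2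
              linarith
          have htz : ((a:ℤ)*(i:ℤ) - k*(b:ℤ))*((b:ℤ)+d) = 0 := by
            rw [ht, zero_mul]
          by_contra h
          push_neg at h
          have hs : ((a:ℤ)+c)*((d:ℤ)+(i:ℤ)) - (k+c)*((b:ℤ)+d) ≤ -1 := by
            have := Int.lt_iff_add_one_le.mp h; linarith
          have h4 : (b:ℤ)*(((a:ℤ)+c)*((d:ℤ)+(i:ℤ)) - (k+c)*((b:ℤ)+d)) ≤ (b:ℤ)*(-1) :=
            mul_le_mul_of_nonneg_left hs hb'.le
          linarith [key k]
        · have ht1 : (1:ℤ) ≤ (a:ℤ)*(i:ℤ) - k*(b:ℤ) := hpos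
          have h3 : (1:ℤ)*((b:ℤ)+d) ≤ ((a:ℤ)*(i:ℤ) - k*(b:ℤ))*((b:ℤ)+d) :=
            mul_le_mul_of_nonneg_right ht1 hB.le
          by_contra h
          push_neg at h
          have hs : ((a:ℤ)+c)*((d:ℤ)+(i:ℤ)) - (k+c)*((b:ℤ)+d) ≤ -1 := by
            have := Int.lt_iff_add_one_le.mp h; linarith
          have h4 : (b:ℤ)*(((a:ℤ)+c)*((d:ℤ)+(i:ℤ)) - (k+c)*((b:ℤ)+d)) ≤ (b:ℤ)*(-1) :=
            mul_le_mul_of_nonneg_left hs hb'.le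
          linarith [key k]
end

section
/- Fix an integer m ≥ 2. For coprime integers a, b with 1 ≤ a < b, let Λ(a/b) denote the maximum of |z| over the complex roots z of the digit polynomial D_{a/b}. Then for any two such coprime pairs (a, b) and (c, d): a/b < c/d (as rational numbers) if and only if Λ(a/b) < Λ(c/d). (This is the monotonicity of entropy: Φ(f) < Φ(g) if and only if the stretch factor λ(ψ_f) is less than λ(ψ_g).) -/
/-!
Write `θ = b / a`. On the open unit disc the reciprocal polynomial
`Q(w) = w ^ (b + 1) D_{a/b}(1 / w)` factors as `(1 - w ^ b) (1 - G_θ(w))`, where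
`G_θ(w) = (m - 2) w / (1 - w) + 2 w + ∑_{k ≥ 1} (w ^ ⌈k θ⌉ + w ^ (⌊k θ⌋ + 1))`:
the positions `i` with `c_i = m` are `1` and the ceilings `⌈k θ⌉`, `1 ≤ k ≤ a`, and both exponent
sequences grow by `b` when `k` grows by `a`. Since `G_θ` has nonnegative coefficients,
`‖G_θ(w)‖ ≤ G_θ(‖w‖)` and `G_θ` is strictly increasing on `[0, 1)`. By the intermediate value
theorem `Q` has a root `x_θ ∈ (0, 1)`, so `G_θ(x_θ) = 1`; then `1 / x_θ` is a root of `D_{a/b}`,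
while any root `z` with `‖z‖ > 1` has `1 = ‖G_θ(1 / z)‖ ≤ G_θ(1 / ‖z‖)`, i.e. `‖z‖ ≤ 1 / x_θ`.
Thus `Λ(a/b) = 1 / x_θ`. Finally `G_θ(x)` is strictly decreasing in `θ`, so `x_θ` increases with
`θ` and `Λ(a/b)` increases with `a / b`.
-/

open Polynomial

/-- `Λ(a/b)`: the maximum modulus of a complex root of the digit polynomial `D_{a/b}`. -/
noncomputable def maxRootModulus (m : ℤ) (a b : ℕ) : ℝ :=
  sSup {x : ℝ | ∃ z : ℂ, (Polynomial.aeval z) (digitPoly m a b) = 0 ∧ x = ‖z‖}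

open Finset

section GeometricTail

variable {K : Type*} [NormedField K] [CompleteSpace K] {w : K}

theorem summable_pow_of_le (hw : ‖w‖ < 1) {e : ℕ → ℕ} (he : ∀ k, k ≤ e k) :
    Summable fun k => w ^ e k :=
  .of_norm_bounded (summable_geometric_of_lt_one (norm_nonneg w) hw) fun k => by
    rw [norm_pow]
    exact pow_le_pow_of_le_one (norm_nonneg w) hw.le (he k)

theorem tsum_pow_mul_one_sub_pow (hw : ‖w‖ < 1) {a b : ℕ} {e : ℕ → ℕ} (he : ∀ k, k ≤ e k)
    (hper : ∀ k, e (k + a) = e k + b) :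
    (∑' k, w ^ e k) * (1 - w ^ b) = ∑ k ∈ range a, w ^ e k := by
  have h := (summable_pow_of_le hw he).sum_add_tsum_nat_add a
  simp only [hper, pow_add, tsum_mul_right] at h
  linear_combination -h

end GeometricTail

theorem sum_Icc_pow_mul_one_sub {R : Type*} [CommRing R] (w : R) (n : ℕ) :
    (∑ i ∈ Icc 1 n, w ^ i) * (1 - w) = w * (1 - w ^ n) := by
  induction n with
  | zero => simp
  | succ n ih =>
    rw [← Ico_add_one_right_eq_Icc, sum_Ico_succ_top (by omega), Ico_add_one_right_eq_Icc,
      add_mul, ih]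
    ring

section DigitSeries

variable {K : Type*} [RCLike K] (m : ℤ) (θ : ℝ)

noncomputable def digitSeries (w : K) : K :=
  ((m : K) - 2) * (w / (1 - w)) + 2 * w +
    ∑' k : ℕ, (w ^ ⌈(k + 1 : ℝ) * θ⌉₊ + w ^ (⌊(k + 1 : ℝ) * θ⌋₊ + 1))

variable {m θ}

theorem le_floor_add_one_mul (hθ : 1 ≤ θ) (k : ℕ) : k ≤ ⌊(k + 1 : ℝ) * θ⌋₊ :=
  Nat.le_floor (by nlinarith)

theorem summable_digitSeries_terms (hθ : 1 ≤ θ) {w : K} (hw : ‖w‖ < 1) :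
    Summable fun k : ℕ => w ^ ⌈(k + 1 : ℝ) * θ⌉₊ + w ^ (⌊(k + 1 : ℝ) * θ⌋₊ + 1) :=
  (summable_pow_of_le hw fun k => (le_floor_add_one_mul hθ k).trans (Nat.floor_le_ceil _)).add
    (summable_pow_of_le hw fun k => (le_floor_add_one_mul hθ k).trans (Nat.le_succ _))

theorem norm_digitSeries_le (hm : 2 ≤ m) (hθ : 1 ≤ θ) {w : K} (hw : ‖w‖ < 1) :
    ‖digitSeries m θ w‖ ≤ digitSeries m θ ‖w‖ := by
  have hw' : ‖(‖w‖ : ℝ)‖ < 1 := by rwa [norm_norm]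
  have hcoeff : ‖(m : K) - 2‖ = (m : ℝ) - 2 := by
    rw [show (m : K) - 2 = (((m : ℝ) - 2 : ℝ) : K) by push_cast; ring, RCLike.norm_ofReal,
      abs_of_nonneg (sub_nonneg.2 (by exact_mod_cast hm))]
  have hfrac : ‖w / (1 - w)‖ ≤ ‖w‖ / (1 - ‖w‖) := by
    rw [norm_div]
    gcongr
    simpa using norm_sub_norm_le (1 : K) w
  have htail := (summable_digitSeries_terms hθ hw).norm
  refine (norm_add_le _ _).trans (add_le_add ((norm_add_le _ _).trans (add_le_add ?_ ?_)) ?_)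
  · rw [norm_mul, hcoeff]
    exact mul_le_mul_of_nonneg_left hfrac (sub_nonneg.2 (by exact_mod_cast hm))
  · simp
  · refine (norm_tsum_le_tsum_norm htail).trans
      (htail.tsum_le_tsum (fun k => ?_) (summable_digitSeries_terms hθ hw'))
    exact (norm_add_le _ _).trans_eq (by simp only [norm_pow])

theorem digitSeries_strictMonoOn (hm : 2 ≤ m) (hθ : 1 ≤ θ) :
    StrictMonoOn (digitSeries m θ : ℝ → ℝ) (Set.Ico 0 1) := by
  rintro x ⟨hx0, -⟩ y ⟨-, hy1⟩ hxy
  have hfrac : x / (1 - x) ≤ y / (1 - y) :=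
    div_le_div₀ (by linarith) hxy.le (by linarith) (by linarith)
  have htail : ∑' k : ℕ, (x ^ ⌈(k + 1 : ℝ) * θ⌉₊ + x ^ (⌊(k + 1 : ℝ) * θ⌋₊ + 1)) ≤
      ∑' k : ℕ, (y ^ ⌈(k + 1 : ℝ) * θ⌉₊ + y ^ (⌊(k + 1 : ℝ) * θ⌋₊ + 1)) := by
    refine Summable.tsum_le_tsum (fun k => ?_)
      (summable_digitSeries_terms hθ (by rw [Real.norm_of_nonneg hx0]; linarith))
      (summable_digitSeries_terms hθ (by rw [Real.norm_of_nonneg (by linarith)]; linarith))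
    gcongr
  have hm' : (0 : ℝ) ≤ m - 2 := sub_nonneg.2 (by exact_mod_cast hm)
  unfold digitSeries
  nlinarith [mul_le_mul_of_nonneg_left hfrac hm']

theorem exists_floor_mul_lt_floor_mul {θ θ' : ℝ} (hθ' : 0 ≤ θ') (hlt : θ' < θ) :
    ∃ n : ℕ, ⌊(n + 1 : ℝ) * θ'⌋₊ < ⌊(n + 1 : ℝ) * θ⌋₊ := by
  obtain ⟨n, hn⟩ := exists_nat_gt (1 / (θ - θ'))
  rw [div_lt_iff₀ (sub_pos.2 hlt)] at hn
  refine ⟨n, ?_⟩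
  calc ⌊(n + 1 : ℝ) * θ'⌋₊ < ⌊(n + 1 : ℝ) * θ'⌋₊ + 1 := Nat.lt_succ_self _
    _ = ⌊(n + 1 : ℝ) * θ' + 1⌋₊ := (Nat.floor_add_one (by positivity)).symm
    _ ≤ ⌊(n + 1 : ℝ) * θ⌋₊ := Nat.floor_le_floor (by nlinarith)

theorem digitSeries_strictAntiOn_slope {x : ℝ} (hx : x ∈ Set.Ioo (0 : ℝ) 1) :
    StrictAntiOn (fun θ => digitSeries m θ x) (Set.Ici 1) := by
  rintro θ' hθ' θ hθ hlt
  obtain ⟨hx0, hx1⟩ := hx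
  obtain ⟨n, hfloor⟩ := exists_floor_mul_lt_floor_mul (zero_le_one.trans hθ') hlt
  have htail : ∑' k : ℕ, (x ^ ⌈(k + 1 : ℝ) * θ⌉₊ + x ^ (⌊(k + 1 : ℝ) * θ⌋₊ + 1)) <
      ∑' k : ℕ, (x ^ ⌈(k + 1 : ℝ) * θ'⌉₊ + x ^ (⌊(k + 1 : ℝ) * θ'⌋₊ + 1)) := by
    refine Summable.tsum_lt_tsum_of_nonneg (i := n) (fun k => by positivity) (fun k => ?_) ?_
      (summable_digitSeries_terms hθ' (by rw [Real.norm_of_nonneg hx0.le]; exact hx1))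
    · exact add_le_add (pow_le_pow_of_le_one hx0.le hx1.le (by gcongr))
        (pow_le_pow_of_le_one hx0.le hx1.le (by gcongr))
    · exact add_lt_add_of_le_of_lt (pow_le_pow_of_le_one hx0.le hx1.le (by gcongr))
        (pow_lt_pow_right_of_lt_one₀ hx0 hx1 (by omega))
  simp only [digitSeries]
  linarith

theorem lt_iff_of_digitSeries_eq_one (hm : 2 ≤ m) {θ' x x' : ℝ} (hθ : 1 ≤ θ) (hθ' : 1 ≤ θ')
    (hx : x ∈ Set.Ioo 0 1) (hx' : x' ∈ Set.Ioo 0 1) (h : digitSeries m θ x = 1)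
    (h' : digitSeries m θ' x' = 1) : x' < x ↔ θ' < θ := by
  have hmono := digitSeries_strictMonoOn hm hθ'
  have hx_mem : x ∈ Set.Ico (0 : ℝ) 1 := Set.Ioo_subset_Ico_self hx
  have hx'_mem : x' ∈ Set.Ico (0 : ℝ) 1 := Set.Ioo_subset_Ico_self hx'
  constructor
  · intro hlt
    by_contra hle
    have hanti := (digitSeries_strictAntiOn_slope (m := m) hx).antitoneOn hθ hθ' (not_lt.1 hle)
    exact (not_le.2 hlt) ((hmono.le_iff_le hx_mem hx'_mem).1 (by linarith))
  · intro hlt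
    have hanti := digitSeries_strictAntiOn_slope (m := m) hx hθ' hθ hlt
    exact (hmono.lt_iff_lt hx'_mem hx_mem).1 (by linarith)

end DigitSeries

section MaxDigits

variable {a b : ℕ}

theorem one_le_natCast_div (ha : 0 < a) (hab : a ≤ b) : (1 : ℝ) ≤ b / a :=
  (one_le_div (by positivity)).2 (by exact_mod_cast hab)

/-- The positions `i ∈ [1, b]` at which `c_i = m`. -/
noncomputable def maxDigitPositions (a b : ℕ) : Finset ℕ :=
  insert 1 ((range a).image fun k : ℕ => ⌈(k + 1 : ℝ) * (b / a)⌉₊)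

theorem strictMono_ceil_mul {θ : ℝ} (hθ : 1 ≤ θ) : StrictMono fun k : ℕ => ⌈(k + 1 : ℝ) * θ⌉₊ :=
  strictMono_nat_of_lt_succ fun k => by
    calc ⌈(k + 1 : ℝ) * θ⌉₊ < ⌈(k + 1 : ℝ) * θ⌉₊ + 1 := Nat.lt_succ_self _
      _ = ⌈(k + 1 : ℝ) * θ + 1⌉₊ := (Nat.ceil_add_one (by positivity)).symm
      _ ≤ ⌈((k + 1 : ℕ) + 1 : ℝ) * θ⌉₊ := Nat.ceil_le_ceil (by push_cast; nlinarith)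

theorem one_lt_ceil_mul_div (ha : 0 < a) (hab : a < b) (k : ℕ) :
    1 < ⌈(k + 1 : ℝ) * (b / a)⌉₊ := by
  have hθ : (1 : ℝ) < b / a := (one_lt_div (by positivity)).2 (by exact_mod_cast hab)
  exact Nat.lt_ceil.2 (by push_cast; nlinarith)

theorem ceil_mul_div_le (ha : 0 < a) {k : ℕ} (hk : k < a) : ⌈(k + 1 : ℝ) * (b / a)⌉₊ ≤ b := by
  rw [Nat.ceil_le, mul_div_assoc', div_le_iff₀ (by positivity), mul_comm]
  gcongr
  exact_mod_cast hk

theorem maxDigitPositions_subset (ha : 0 < a) (hab : a < b) : maxDigitPositions a b ⊆ Icc 1 b := by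
  intro i hi
  simp only [maxDigitPositions, mem_insert, mem_image, mem_range] at hi
  rcases hi with rfl | ⟨k, hk, rfl⟩
  · exact mem_Icc.2 ⟨le_rfl, by omega⟩
  · exact mem_Icc.2 ⟨(one_lt_ceil_mul_div ha hab k).le, ceil_mul_div_le ha hk⟩

theorem exists_mul_mem_Icc_iff_mem_maxDigitPositions (ha : 0 < a) (hab : a < b)
    (hcop : a.Coprime b) {i : ℕ} (hi : i ∈ Icc 1 b) :
    (∃ k : ℤ, (a : ℤ) * ((i : ℤ) - 1) ≤ k * b ∧ k * b ≤ (a : ℤ) * i) ↔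
      i ∈ maxDigitPositions a b := by
  obtain ⟨hi1, hib⟩ := mem_Icc.1 hi
  have ha' : (0 : ℝ) < a := by exact_mod_cast ha
  simp only [maxDigitPositions, mem_insert, mem_image, mem_range]
  constructor
  · rintro ⟨k, hk1, hk2⟩
    refine or_iff_not_imp_left.2 fun hne1 => ?_
    have hi2 : 2 ≤ i := by omega
    have hk0 : 0 < k := by nlinarith
    have hka : k ≤ a := by nlinarith
    lift k to ℕ using hk0.le
    obtain ⟨n, rfl⟩ : ∃ n, k = n + 1 := ⟨k - 1, by omega⟩
    -- equality `a (i - 1) = k b` would force `a ∣ k`, i.e. `k = a` and `i = b + 1`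
    have hlt : (a : ℤ) * ((i : ℤ) - 1) < ((n : ℤ) + 1) * b := by
      refine lt_of_le_of_ne (by exact_mod_cast hk1) fun heq => ?_
      have heq' : a * (i - 1) = (n + 1) * b := by zify [hi1]; exact heq
      have hdvd : a ∣ n + 1 := hcop.dvd_of_dvd_mul_right ⟨i - 1, heq'.symm⟩
      have hna : n + 1 = a := le_antisymm (by exact_mod_cast hka) (Nat.le_of_dvd (by omega) hdvd)
      rw [hna, mul_comm a b, mul_comm] at heq'
      have := Nat.eq_of_mul_eq_mul_right ha heq'
      omega
    refine ⟨n, by exact_mod_cast hka, (Nat.ceil_eq_iff (by omega)).2 ⟨?_, ?_⟩⟩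
    · rw [mul_div_assoc', lt_div_iff₀ ha', Nat.cast_sub hi1, Nat.cast_one, mul_comm]
      exact_mod_cast hlt
    · rw [mul_div_assoc', div_le_iff₀ ha', mul_comm (i : ℝ)]
      exact_mod_cast hk2
  · rintro (rfl | ⟨k, -, rfl⟩)
    · exact ⟨0, by simp⟩
    · set x : ℝ := (k + 1 : ℝ) * (b / a) with hx
      have hx0 : 0 ≤ x := by positivity
      have hax : (a : ℝ) * x = (k + 1) * b := by rw [hx]; field_simp
      have hlo : (a : ℝ) * ((⌈x⌉₊ : ℝ) - 1) ≤ (k + 1) * b := by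
        nlinarith [Nat.ceil_lt_add_one hx0]
      have hhi : ((k : ℝ) + 1) * b ≤ a * ⌈x⌉₊ := by nlinarith [Nat.le_ceil x]
      exact ⟨k + 1, by exact_mod_cast hlo, by exact_mod_cast hhi⟩

theorem ceil_mul_div_eq_floor_add_one (hcop : a.Coprime b) {k : ℕ} (hk : k + 1 < a) :
    ⌈(k + 1 : ℝ) * (b / a)⌉₊ = ⌊(k + 1 : ℝ) * (b / a)⌋₊ + 1 := by
  set x : ℝ := (k + 1 : ℝ) * (b / a) with hx
  have ha : (a : ℝ) ≠ 0 := Nat.cast_ne_zero.2 (by omega)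
  have hax : (a : ℝ) * x = (k + 1) * b := by rw [hx]; field_simp
  refine le_antisymm (Nat.ceil_le_floor_add_one x) (Nat.lt_ceil.2 ?_)
  refine (Nat.floor_le (by positivity)).lt_of_ne fun hfloor => ?_
  have hmul : a * ⌊x⌋₊ = (k + 1) * b := by exact_mod_cast hfloor ▸ hax
  have hdvd : a ∣ k + 1 := hcop.dvd_of_dvd_mul_right ⟨_, hmul.symm⟩
  exact absurd (Nat.le_of_dvd (by omega) hdvd) (by omega)

theorem sum_range_pow_floor_add_one {R : Type*} [CommRing R] (ha : 0 < a) (hcop : a.Coprime b)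
    (w : R) :
    ∑ k ∈ range a, w ^ (⌊(k + 1 : ℝ) * (b / a)⌋₊ + 1) =
      ∑ k ∈ range a, w ^ ⌈(k + 1 : ℝ) * (b / a)⌉₊ - w ^ b + w ^ (b + 1) := by
  obtain ⟨a, rfl⟩ : ∃ a', a = a' + 1 := ⟨a - 1, by omega⟩
  have hlast : ((a : ℕ) + 1 : ℝ) * (b / ((a + 1 : ℕ) : ℝ)) = b := by push_cast; field_simp
  rw [sum_range_succ, sum_range_succ, hlast, Nat.floor_natCast, Nat.ceil_natCast,
    sum_congr rfl fun k hk => by rw [← ceil_mul_div_eq_floor_add_one hcop (by simpa using hk)]]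
  ring

end MaxDigits

section Reciprocal

variable {a b : ℕ} (m : ℤ)

/-- The reciprocal polynomial `w ^ (b + 1) D_{a/b}(1 / w)`, evaluated at `w`. -/
noncomputable def recipDigit {R : Type*} [Ring R] (a b : ℕ) (w : R) : R :=
  1 + w ^ (b + 1) - ∑ i ∈ Icc 1 b, (digitCoeff m a b i : R) * w ^ i

variable {m}

theorem pow_mul_aeval_inv_digitPoly {K : Type*} [Field K] {w : K} (hw : w ≠ 0) :
    w ^ (b + 1) * aeval w⁻¹ (digitPoly m a b) = recipDigit m a b w := by
  have hterm : ∀ i ∈ Icc 1 b,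
      w ^ (b + 1) * (aeval w⁻¹ (C (digitCoeff m a b i)) * w⁻¹ ^ (b + 1 - i)) =
        (digitCoeff m a b i : K) * w ^ i := fun i hi => by
    rw [aeval_C, algebraMap_int_eq, eq_intCast,
      ← pow_sub_mul_pow w (show i ≤ b + 1 by simp at hi; omega), inv_pow]
    field_simp
  simp only [digitPoly, recipDigit, map_sub, map_add, map_pow, aeval_X, map_one, map_sum,
    map_mul, mul_sub, mul_add, mul_one, mul_sum]
  rw [sum_congr rfl hterm, ← mul_pow, mul_inv_cancel₀ hw, one_pow]

theorem digitCoeff_eq_ite (ha : 0 < a) (hab : a < b) (hcop : a.Coprime b) {i : ℕ}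
    (hi : i ∈ Icc 1 b) :
    digitCoeff m a b i = if i ∈ maxDigitPositions a b then m else m - 2 := by
  simp only [digitCoeff, exists_mul_mem_Icc_iff_mem_maxDigitPositions ha hab hcop hi]

theorem sum_digitCoeff_mul_pow {R : Type*} [CommRing R] (ha : 0 < a) (hab : a < b)
    (hcop : a.Coprime b) (w : R) :
    ∑ i ∈ Icc 1 b, (digitCoeff m a b i : R) * w ^ i =
      ((m : R) - 2) * ∑ i ∈ Icc 1 b, w ^ i +
        2 * (w + ∑ k ∈ range a, w ^ ⌈(k + 1 : ℝ) * (b / a)⌉₊) := by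
  have hterm : ∀ i ∈ Icc 1 b, (digitCoeff m a b i : R) * w ^ i =
      ((m : R) - 2) * w ^ i + if i ∈ maxDigitPositions a b then 2 * w ^ i else 0 := by
    intro i hi
    rw [digitCoeff_eq_ite ha hab hcop hi]
    split_ifs <;> push_cast <;> ring
  have hinj : Set.InjOn (fun k : ℕ => ⌈(k + 1 : ℝ) * (b / a)⌉₊) (range a) :=
    (strictMono_ceil_mul (one_le_natCast_div ha hab.le)).injective.injOn
  have hone : 1 ∉ (range a).image fun k : ℕ => ⌈(k + 1 : ℝ) * (b / a)⌉₊ := by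
    simp only [mem_image, not_exists, not_and]
    exact fun k _ => (one_lt_ceil_mul_div ha hab k).ne'
  rw [sum_congr rfl hterm, sum_add_distrib, ← mul_sum, sum_ite_mem,
    inter_eq_right.2 (maxDigitPositions_subset ha hab), maxDigitPositions, sum_insert hone,
    sum_image hinj, ← mul_sum, pow_one, mul_add]

theorem recipDigit_eq_mul_one_sub_digitSeries {K : Type*} [RCLike K] {w : K} (ha : 0 < a)
    (hab : a < b) (hcop : a.Coprime b) (hw : ‖w‖ < 1) :
    recipDigit m a b w = (1 - w ^ b) * (1 - digitSeries m (b / a) w) := by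
  have hθ := one_le_natCast_div ha hab.le
  have hper (k : ℕ) : ((k + a : ℕ) + 1 : ℝ) * (b / a) = (k + 1 : ℝ) * (b / a) + b := by
    push_cast; field_simp; ring
  have hle_ceil (k : ℕ) : k ≤ ⌈(k + 1 : ℝ) * (b / a)⌉₊ :=
    (le_floor_add_one_mul hθ k).trans (Nat.floor_le_ceil _)
  have hle_floor (k : ℕ) : k ≤ ⌊(k + 1 : ℝ) * (b / a)⌋₊ + 1 :=
    (le_floor_add_one_mul hθ k).trans (Nat.le_succ _)
  have hceil := tsum_pow_mul_one_sub_pow hw (a := a) (b := b) hle_ceil fun k => by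
    rw [hper, Nat.ceil_add_natCast (by positivity)]
  have hfloor := tsum_pow_mul_one_sub_pow hw (a := a) (b := b) hle_floor fun k => by
    rw [hper, Nat.floor_add_natCast (by positivity), add_right_comm]
  have hgeom : (1 - w ^ b) * (w / (1 - w)) = ∑ i ∈ Icc 1 b, w ^ i := by
    have hw1 : 1 - w ≠ 0 := fun h => by
      rw [← sub_eq_zero.1 h, norm_one] at hw
      exact lt_irrefl _ hw
    rw [mul_div_assoc', div_eq_iff hw1, sum_Icc_pow_mul_one_sub, mul_comm]
  rw [recipDigit, sum_digitCoeff_mul_pow ha hab hcop, digitSeries,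
    (summable_pow_of_le hw hle_ceil).tsum_add (summable_pow_of_le hw hle_floor)]
  rw [sum_range_pow_floor_add_one ha hcop] at hfloor
  linear_combination ((m : K) - 2) * hgeom + hceil + hfloor

theorem digitSeries_eq_one_of_recipDigit_eq_zero {K : Type*} [RCLike K] (ha : 0 < a)
    (hab : a < b) (hcop : a.Coprime b) {w : K} (hw : ‖w‖ < 1) (h : recipDigit m a b w = 0) :
    digitSeries m (b / a) w = 1 := by
  have hwb : 1 - w ^ b ≠ 0 := fun h => by
    have : ‖w ^ b‖ < 1 := by rw [norm_pow]; exact pow_lt_one₀ (norm_nonneg w) hw (by omega)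
    rw [← sub_eq_zero.1 h, norm_one] at this
    exact lt_irrefl _ this
  rw [recipDigit_eq_mul_one_sub_digitSeries ha hab hcop hw] at h
  exact (sub_eq_zero.1 ((mul_eq_zero.1 h).resolve_left hwb)).symm

theorem recipDigit_one_neg (hm : 2 ≤ m) (ha : 0 < a) (hab : a < b) (hcop : a.Coprime b) :
    recipDigit m a b (1 : ℝ) < 0 := by
  have hm' : (2 : ℝ) ≤ m := by exact_mod_cast hm
  rw [recipDigit, sum_digitCoeff_mul_pow ha hab hcop]
  simp only [one_pow, sum_const, Nat.card_Icc, card_range, nsmul_eq_mul, mul_one,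
    Nat.add_sub_cancel]
  nlinarith [(Nat.cast_pos (α := ℝ)).2 ha, (Nat.cast_nonneg (α := ℝ) b)]

theorem exists_recipDigit_eq_zero (hm : 2 ≤ m) (ha : 0 < a) (hab : a < b) (hcop : a.Coprime b) :
    ∃ x ∈ Set.Ioo (0 : ℝ) 1, recipDigit m a b x = 0 := by
  have hcont : ContinuousOn (recipDigit m a b : ℝ → ℝ) (Set.Icc 0 1) := by
    unfold recipDigit
    fun_prop
  have hzero : recipDigit m a b (0 : ℝ) = 1 := by
    rw [recipDigit, sum_eq_zero fun i hi => by rw [zero_pow (by simp at hi; omega), mul_zero]]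
    simp
  exact intermediate_value_Ioo' zero_le_one hcont
    ⟨recipDigit_one_neg hm ha hab hcop, hzero ▸ zero_lt_one⟩

end Reciprocal

section MaxRoot

variable {m : ℤ} {a b : ℕ}

theorem norm_le_of_aeval_digitPoly_eq_zero (hm : 2 ≤ m) (ha : 0 < a) (hab : a < b)
    (hcop : a.Coprime b) {x : ℝ} (hx : x ∈ Set.Ioo 0 1) (hGx : digitSeries m (b / a) x = 1)
    {z : ℂ} (hz : aeval z (digitPoly m a b) = 0) : ‖z‖ ≤ x⁻¹ := by
  have hθ := one_le_natCast_div ha hab.le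
  have hx_inv : 1 < x⁻¹ := (one_lt_inv₀ hx.1).2 hx.2
  rcases eq_or_ne z 0 with rfl | hz0
  · simpa using hx.1.le
  rcases le_or_gt 1 ‖z⁻¹‖ with hw | hw
  · rw [norm_inv] at hw
    exact (one_le_inv₀ (norm_pos_iff.2 hz0)).1 hw |>.trans hx_inv.le
  have hrecip : recipDigit m a b z⁻¹ = 0 := by
    rw [← pow_mul_aeval_inv_digitPoly (inv_ne_zero hz0), inv_inv, hz, mul_zero]
  have hGw := digitSeries_eq_one_of_recipDigit_eq_zero ha hab hcop hw hrecip
  have hle : digitSeries m (b / a) x ≤ digitSeries m (b / a) ‖z⁻¹‖ := by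
    simpa [hGx, hGw] using norm_digitSeries_le hm hθ hw
  have hxw := ((digitSeries_strictMonoOn hm hθ).le_iff_le ⟨hx.1.le, hx.2⟩
    ⟨norm_nonneg _, hw⟩).1 hle
  rw [norm_inv] at hxw
  exact (le_inv_comm₀ hx.1 (norm_pos_iff.2 hz0)).1 hxw

theorem exists_maxRootModulus_eq_inv (hm : 2 ≤ m) (ha : 0 < a) (hab : a < b)
    (hcop : a.Coprime b) :
    ∃ x ∈ Set.Ioo (0 : ℝ) 1, digitSeries m (b / a) x = 1 ∧ maxRootModulus m a b = x⁻¹ := by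
  obtain ⟨x, hx, hroot⟩ := exists_recipDigit_eq_zero hm ha hab hcop
  have hGx := digitSeries_eq_one_of_recipDigit_eq_zero ha hab hcop
    (by rw [Real.norm_of_nonneg hx.1.le]; exact hx.2) hroot
  refine ⟨x, hx, hGx, IsGreatest.csSup_eq ⟨⟨(x⁻¹ : ℝ), ?_, ?_⟩, ?_⟩⟩
  · rw [← pow_mul_aeval_inv_digitPoly hx.1.ne'] at hroot
    have := (mul_eq_zero.1 hroot).resolve_left (pow_ne_zero _ hx.1.ne')
    rw [← Complex.coe_algebraMap, aeval_algebraMap_apply, this, map_zero]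
  · simp [abs_of_pos hx.1]
  · rintro _ ⟨z, hz, rfl⟩
    exact norm_le_of_aeval_digitPoly_eq_zero hm ha hab hcop hx hGx hz

end MaxRoot

/-- Monotonicity of entropy: for coprime fractions `a/b, c/d ∈ (0,1)`,
`a/b < c/d` iff the maximal root modulus (stretch factor) of `D_{a/b}` is smaller
than that of `D_{c/d}`. -/
theorem stretch_factor_monotone (m : ℤ) (hm : 2 ≤ m)
    (a b c d : ℕ) (ha : 1 ≤ a) (hab : a < b) (hcop₁ : Nat.Coprime a b)
    (hc : 1 ≤ c) (hcd : c < d) (hcop₂ : Nat.Coprime c d) :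
    (a : ℚ) / b < (c : ℚ) / d ↔ maxRootModulus m a b < maxRootModulus m c d := by
  obtain ⟨x, hx, hGx, hΛx⟩ := exists_maxRootModulus_eq_inv hm ha hab hcop₁
  obtain ⟨y, hy, hGy, hΛy⟩ := exists_maxRootModulus_eq_inv hm hc hcd hcop₂
  have hθ₁ := one_le_natCast_div ha hab.le
  have hθ₂ := one_le_natCast_div hc hcd.le
  rw [hΛx, hΛy, inv_lt_inv₀ hx.1 hy.1, lt_iff_of_digitSeries_eq_one hm hθ₁ hθ₂ hx hy hGx hGy,
    div_lt_div_iff₀ (Nat.cast_pos.2 (by omega)) (Nat.cast_pos.2 (by omega)),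
    div_lt_div_iff₀ (by exact_mod_cast hc) (by exact_mod_cast ha)]
  norm_cast
  rw [mul_comm d, mul_comm b]
end

section
/- Fix an integer m ≥ 2. For coprime integers a, b with 1 ≤ a < b, let Λ(a/b) denote the maximum of |z| over the complex roots z of the digit polynomial D_{a/b}. Then the supremum of the set { Λ(a/b) : a, b coprime, 1 ≤ a < b } equals m + 1, and its infimum equals (m + 1 + √((m+1)² − 8))/2. -/
open Polynomial

section DigitCoeff

variable (m : ℤ) {a b i : ℕ}

lemma digitCoeff_le : digitCoeff m a b i ≤ m := by
  unfold digitCoeff; split <;> omega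

lemma sub_two_le_digitCoeff : m - 2 ≤ digitCoeff m a b i := by
  unfold digitCoeff; split <;> omega

lemma digitCoeff_first : digitCoeff m a b 1 = m :=
  if_pos ⟨0, by simp⟩

lemma digitCoeff_last (hab : a ≤ b) : digitCoeff m a b b = m := by
  refine if_pos ⟨a, ?_, le_rfl⟩
  have : (a : ℤ) ≤ b := by exact_mod_cast hab
  nlinarith

lemma digitCoeff_sub_one_self (hi : 1 ≤ i) (hib : i ≤ b) : digitCoeff m (b - 1) b i = m := by
  refine if_pos ⟨i - 1, ?_, ?_⟩ <;> push_cast [hi.trans hib] <;> nlinarith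

lemma digitCoeff_one_left (hi : 1 < i) (hib : i < b) : digitCoeff m 1 b i = m - 2 := by
  refine if_neg ?_
  rintro ⟨k, hk₁, hk₂⟩
  push_cast at hk₁ hk₂
  have hk : 1 ≤ k := by nlinarith
  nlinarith

lemma digitCoeff_one_left_le (hab : a ≤ b) (hi : 1 ≤ i) (hib : i ≤ b) :
    digitCoeff m 1 b i ≤ digitCoeff m a b i := by
  rcases hi.eq_or_lt with rfl | hi
  · rw [digitCoeff_first, digitCoeff_first]
  rcases hib.eq_or_lt with rfl | hib
  · rw [digitCoeff_last m hab, digitCoeff_last m hi.le]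
  rw [digitCoeff_one_left m hi hib]
  exact sub_two_le_digitCoeff m

end DigitCoeff

lemma aeval_digitPoly {A : Type*} [CommRing A] (m : ℤ) (a b : ℕ) (z : A) :
    aeval z (digitPoly m a b)
      = z ^ (b + 1) + 1 - ∑ i ∈ Finset.Icc 1 b, (digitCoeff m a b i : A) * z ^ (b + 1 - i) := by
  simp [digitPoly, map_sum]

lemma sum_Icc_pow_mul_sub_one {R : Type*} [CommRing R] (x : R) (b : ℕ) :
    (∑ i ∈ Finset.Icc 1 b, x ^ (b + 1 - i)) * (x - 1) = x ^ (b + 1) - x := by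
  have reflect : ∑ i ∈ Finset.Icc 1 b, x ^ (b + 1 - i) = x * ∑ j ∈ Finset.range b, x ^ j := by
    rw [Finset.mul_sum]
    refine Finset.sum_bij' (fun i _ => b - i) (fun j _ => b - j) ?_ ?_ ?_ ?_ ?_ <;>
      intro i hi <;> simp only [Finset.mem_Icc, Finset.mem_range] at hi ⊢ <;> try omega
    rw [← pow_succ', show b - i + 1 = b + 1 - i by omega]
  rw [reflect, mul_assoc, geom_sum_mul]
  ring

section ClosedForms

variable {A : Type*} [CommRing A] (m : ℤ) (x : A)

lemma aeval_digitPoly_sub_one_self_mul (b : ℕ) :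
    aeval x (digitPoly m (b - 1) b) * (x - 1)
      = x ^ (b + 1) * (x - (m + 1)) + (m + 1) * x - 1 := by
  have coeffs : ∑ i ∈ Finset.Icc 1 b, (digitCoeff m (b - 1) b i : A) * x ^ (b + 1 - i)
      = m * ∑ i ∈ Finset.Icc 1 b, x ^ (b + 1 - i) := by
    rw [Finset.mul_sum]
    refine Finset.sum_congr rfl fun i hi => ?_
    rw [Finset.mem_Icc] at hi
    rw [digitCoeff_sub_one_self m hi.1 hi.2]
  rw [aeval_digitPoly, coeffs]
  linear_combination (-(m : A)) * sum_Icc_pow_mul_sub_one x b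

lemma aeval_digitPoly_one_left_mul {b : ℕ} (hb : 2 ≤ b) :
    aeval x (digitPoly m 1 b) * (x - 1)
      = x ^ b * (x ^ 2 - (m + 1) * x + 2) - 2 * x ^ 2 + (m + 1) * x - 1 := by
  have excess : ∑ i ∈ Finset.Icc 1 b, ((digitCoeff m 1 b i : A) - (m - 2)) * x ^ (b + 1 - i)
      = 2 * x ^ b + 2 * x := by
    rw [← Finset.sum_subset (s₁ := {1, b}), Finset.sum_pair (by omega), digitCoeff_first,
      digitCoeff_last m (by omega), Nat.add_sub_cancel, show b + 1 - b = 1 by omega]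
    · ring
    · intro i hi
      simp only [Finset.mem_insert, Finset.mem_singleton] at hi
      rcases hi with rfl | rfl <;> simp only [Finset.mem_Icc] <;> omega
    · intro i hi hi'
      simp only [Finset.mem_Icc, Finset.mem_insert, Finset.mem_singleton] at hi hi'
      rw [digitCoeff_one_left m (by omega) (by omega)]
      push_cast; ring
  simp only [sub_mul, Finset.sum_sub_distrib, ← Finset.mul_sum] at excess
  rw [aeval_digitPoly]
  linear_combination (-((m : A) - 2)) * sum_Icc_pow_mul_sub_one x b - (x - 1) * excess

end ClosedForms

section RootBounds

variable {m : ℤ} {a b : ℕ}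

lemma aeval_digitPoly_le_of_digitCoeff_le {a' : ℕ}
    (h : ∀ i ∈ Finset.Icc 1 b, digitCoeff m a b i ≤ digitCoeff m a' b i) {x : ℝ} (hx : 0 ≤ x) :
    aeval x (digitPoly m a' b) ≤ aeval x (digitPoly m a b) := by
  rw [aeval_digitPoly, aeval_digitPoly]
  gcongr with i hi
  exact_mod_cast h i hi

lemma two_lt_aeval_digitPoly (hm : 1 ≤ m) (a b : ℕ) {x : ℝ} (hx : m + 1 < x) :
    2 < aeval x (digitPoly m a b) := by
  have hm' : (1 : ℝ) ≤ m := by exact_mod_cast hm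
  have hcmp : aeval x (digitPoly m (b - 1) b) ≤ aeval x (digitPoly m a b) :=
    aeval_digitPoly_le_of_digitCoeff_le (fun i hi => by
      rw [Finset.mem_Icc] at hi
      rw [digitCoeff_sub_one_self m hi.1 hi.2]
      exact digitCoeff_le m) (by linarith)
  have hprod : 0 < (aeval x (digitPoly m (b - 1) b) - 2) * (x - 1) := by
    rw [sub_mul, aeval_digitPoly_sub_one_self_mul]
    have : 0 < x ^ (b + 1) * (x - (m + 1)) := mul_pos (pow_pos (by linarith) _) (by linarith)
    nlinarith
  linarith [pos_of_mul_pos_left hprod (by linarith)]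

lemma aeval_norm_digitPoly_le_two (hm : 2 ≤ m) {z : ℂ} (hz : aeval z (digitPoly m a b) = 0) :
    aeval ‖z‖ (digitPoly m a b) ≤ 2 := by
  rw [aeval_digitPoly] at hz ⊢
  have hc : ∀ i, 0 ≤ digitCoeff m a b i := fun i => by
    linarith [sub_two_le_digitCoeff (a := a) (b := b) (i := i) m]
  have key : ‖z‖ ^ (b + 1)
      ≤ ∑ i ∈ Finset.Icc 1 b, (digitCoeff m a b i : ℝ) * ‖z‖ ^ (b + 1 - i) + 1 := calc
    ‖z‖ ^ (b + 1) = ‖∑ i ∈ Finset.Icc 1 b, (digitCoeff m a b i : ℂ) * z ^ (b + 1 - i) - 1‖ := by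
        rw [← norm_pow]; congr 1; linear_combination hz
    _ ≤ ∑ i ∈ Finset.Icc 1 b, (digitCoeff m a b i : ℝ) * ‖z‖ ^ (b + 1 - i) + 1 := by
        refine (norm_sub_le _ _).trans (add_le_add ((norm_sum_le _ _).trans_eq ?_) norm_one.le)
        refine Finset.sum_congr rfl fun i _ => ?_
        rw [norm_mul, norm_pow, Complex.norm_intCast, abs_of_nonneg (by exact_mod_cast hc i)]
  linarith

lemma norm_le_of_aeval_digitPoly_eq_zero_s11 (hm : 2 ≤ m) {z : ℂ}
    (hz : aeval z (digitPoly m a b) = 0) : ‖z‖ ≤ m + 1 :=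
  le_of_not_gt fun h =>
    (two_lt_aeval_digitPoly (by omega) a b h).not_ge (aeval_norm_digitPoly_le_two hm hz)

lemma maxRootModulus_le_of_forall_lt (hm : 2 ≤ m) {r : ℝ} (hr : 0 ≤ r)
    (h : ∀ x, r < x → 2 < aeval x (digitPoly m a b)) : maxRootModulus m a b ≤ r := by
  refine Real.sSup_le ?_ hr
  rintro _ ⟨z, hz, rfl⟩
  exact le_of_not_gt fun hlt => (h _ hlt).not_ge (aeval_norm_digitPoly_le_two hm hz)

lemma maxRootModulus_le (hm : 2 ≤ m) (a b : ℕ) : maxRootModulus m a b ≤ m + 1 :=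
  maxRootModulus_le_of_forall_lt hm (by positivity) fun _ =>
    two_lt_aeval_digitPoly (by omega) a b

lemma le_maxRootModulus_of_aeval_nonpos (hm : 2 ≤ m) {r : ℝ} (hr : 0 ≤ r)
    (h : aeval r (digitPoly m a b) ≤ 0) : r ≤ maxRootModulus m a b := by
  have hrm : r ≤ m + 2 := by
    by_contra! hlt
    linarith [two_lt_aeval_digitPoly (by omega) a b (show (m : ℝ) + 1 < r by linarith)]
  obtain ⟨s, hs, hroot⟩ := intermediate_value_Icc hrm
    (digitPoly m a b).continuous_aeval.continuousOn
    ⟨h, (two_lt_aeval_digitPoly (by omega) a b (by linarith)).le.trans' zero_le_two⟩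
  have hroot' : aeval (s : ℂ) (digitPoly m a b) = 0 := by
    dsimp only at hroot
    rw [aeval_digitPoly] at hroot ⊢
    exact_mod_cast hroot
  have hbdd : BddAbove {x : ℝ | ∃ z : ℂ, aeval z (digitPoly m a b) = 0 ∧ x = ‖z‖} :=
    ⟨m + 1, by rintro _ ⟨z, hz, rfl⟩; exact norm_le_of_aeval_digitPoly_eq_zero_s11 hm hz⟩
  calc r ≤ s := hs.1
    _ = ‖(s : ℂ)‖ := by rw [Complex.norm_real, Real.norm_of_nonneg (hr.trans hs.1)]
    _ ≤ maxRootModulus m a b := le_csSup hbdd ⟨s, hroot', rfl⟩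

end RootBounds

noncomputable def minStretch (m : ℤ) : ℝ := ((m : ℝ) + 1 + Real.sqrt (((m : ℝ) + 1) ^ 2 - 8)) / 2

section MinStretch

variable {m : ℤ}

lemma one_le_two_mul_minStretch_sub (hm : 2 ≤ m) : 1 ≤ 2 * minStretch m - (m + 1) := by
  have : (2 : ℝ) ≤ m := by exact_mod_cast hm
  have : 1 ≤ Real.sqrt (((m : ℝ) + 1) ^ 2 - 8) := Real.one_le_sqrt.2 (by nlinarith)
  unfold minStretch
  linarith

lemma minStretch_sq (hm : 2 ≤ m) : minStretch m ^ 2 = (m + 1) * minStretch m - 2 := by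
  have : (2 : ℝ) ≤ m := by exact_mod_cast hm
  have hsq := Real.sq_sqrt (show 0 ≤ ((m : ℝ) + 1) ^ 2 - 8 by nlinarith)
  unfold minStretch
  linear_combination hsq / 4

lemma two_le_minStretch (hm : 2 ≤ m) : 2 ≤ minStretch m := by
  have : (2 : ℝ) ≤ m := by exact_mod_cast hm
  linarith [one_le_two_mul_minStretch_sub hm]

lemma sub_minStretch_le (hm : 2 ≤ m) {x : ℝ} (hx : minStretch m ≤ x) :
    x - minStretch m ≤ x ^ 2 - (m + 1) * x + 2 := by
  have hroot := minStretch_sq hm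
  have hgap := one_le_two_mul_minStretch_sub hm
  -- `x² - (m+1)x + 2 = (x - λ)(x - λ')` with `λ' = m + 1 - λ`, and `x - λ' ≥ λ - λ' ≥ 1`
  nlinarith [mul_le_mul_of_nonneg_left (show 1 ≤ x + minStretch m - (m + 1) by linarith)
    (sub_nonneg.2 hx)]

lemma aeval_minStretch_digitPoly_one_left_neg (hm : 2 ≤ m) {b : ℕ} (hb : 2 ≤ b) :
    aeval (minStretch m) (digitPoly m 1 b) < 0 := by
  have hm' : (2 : ℝ) ≤ m := by exact_mod_cast hm
  have hlam := two_le_minStretch hm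
  have hprod : aeval (minStretch m) (digitPoly m 1 b) * (minStretch m - 1)
      = 3 - (m + 1) * minStretch m := by
    rw [aeval_digitPoly_one_left_mul m _ hb, minStretch_sq hm]
    ring
  refine neg_of_mul_neg_left (b := minStretch m - 1) ?_ (by linarith)
  rw [hprod]
  nlinarith

lemma minStretch_le_maxRootModulus (hm : 2 ≤ m) {a b : ℕ} (hab : a ≤ b) (hb : 2 ≤ b) :
    minStretch m ≤ maxRootModulus m a b := by
  refine le_maxRootModulus_of_aeval_nonpos hm (by linarith [two_le_minStretch hm]) ?_
  refine (aeval_digitPoly_le_of_digitCoeff_le (fun i hi => ?_) ?_).trans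
    (aeval_minStretch_digitPoly_one_left_neg hm hb).le
  · rw [Finset.mem_Icc] at hi
    exact digitCoeff_one_left_le m hab hi.1 hi.2
  · linarith [two_le_minStretch hm]

end MinStretch

section Limits

open Filter Topology

variable {m : ℤ}

lemma two_lt_aeval_digitPoly_one_left (hm : 2 ≤ m) {b : ℕ} (hb : 2 ≤ b) {x : ℝ}
    (hx : minStretch m ≤ x) (hbx : 2 ≤ 2 ^ (b - 2) * (x - minStretch m)) :
    2 < aeval x (digitPoly m 1 b) := by
  have hm' : (2 : ℝ) ≤ m := by exact_mod_cast hm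
  have hx2 : 2 ≤ x := (two_le_minStretch hm).trans hx
  have hpow : x ^ b = x ^ 2 * x ^ (b - 2) := by rw [← pow_add, Nat.add_sub_cancel' hb]
  have hpow2 : (2 : ℝ) ^ (b - 2) ≤ x ^ (b - 2) := pow_le_pow_left₀ zero_le_two hx2 _
  have hdom : 2 * x ^ 2 ≤ x ^ b * (x ^ 2 - (m + 1) * x + 2) := by
    rw [hpow]
    have hquad := sub_minStretch_le hm hx
    have : 2 ≤ x ^ (b - 2) * (x ^ 2 - (m + 1) * x + 2) := by
      nlinarith [mul_le_mul hpow2 hquad (by linarith) (by positivity)]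
    nlinarith [sq_nonneg x]
  have hprod : 0 < (aeval x (digitPoly m 1 b) - 2) * (x - 1) := by
    rw [sub_mul, aeval_digitPoly_one_left_mul m x hb]
    nlinarith
  linarith [pos_of_mul_pos_left hprod (by linarith)]

lemma eventually_maxRootModulus_one_left_le (hm : 2 ≤ m) {r : ℝ} (hr : minStretch m < r) :
    ∀ᶠ b in atTop, maxRootModulus m 1 b ≤ r := by
  have hgrowth : Tendsto (fun b : ℕ => (2 : ℝ) ^ (b - 2) * (r - minStretch m)) atTop atTop :=
    ((tendsto_pow_atTop_atTop_of_one_lt one_lt_two).comp (tendsto_sub_atTop_nat 2)).atTop_mul_const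
      (sub_pos.2 hr)
  filter_upwards [hgrowth.eventually_ge_atTop 2, eventually_ge_atTop 2] with b hbig hb
  refine maxRootModulus_le_of_forall_lt hm (by linarith [two_le_minStretch hm]) fun x hx => ?_
  refine two_lt_aeval_digitPoly_one_left hm hb (by linarith) (hbig.trans ?_)
  gcongr

lemma tendsto_maxRootModulus_one_left (hm : 2 ≤ m) :
    Tendsto (fun b => maxRootModulus m 1 b) atTop (𝓝 (minStretch m)) := by
  refine tendsto_order.2 ⟨fun r hr => ?_, fun r hr => ?_⟩
  · filter_upwards [eventually_ge_atTop 2] with b hb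
    exact hr.trans_le (minStretch_le_maxRootModulus hm (by omega) hb)
  · obtain ⟨s, hs, hsr⟩ := exists_between hr
    filter_upwards [eventually_maxRootModulus_one_left_le hm hs] with b hb
    exact hb.trans_lt hsr

lemma aeval_digitPoly_sub_one_self_neg {r : ℝ} (hr : 1 < r) {b : ℕ}
    (hbig : (m + 1) * r - 1 < r ^ (b + 1) * (m + 1 - r)) :
    aeval r (digitPoly m (b - 1) b) < 0 := by
  refine neg_of_mul_neg_left (b := r - 1) ?_ (by linarith)
  rw [aeval_digitPoly_sub_one_self_mul]
  linarith

lemma eventually_le_maxRootModulus_sub_one_self (hm : 2 ≤ m) {r : ℝ} (hr₁ : 1 < r)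
    (hr : r < m + 1) : ∀ᶠ b in atTop, r ≤ maxRootModulus m (b - 1) b := by
  have hgrowth : Tendsto (fun b : ℕ => r ^ (b + 1) * (m + 1 - r)) atTop atTop :=
    ((tendsto_pow_atTop_atTop_of_one_lt hr₁).comp (tendsto_add_atTop_nat 1)).atTop_mul_const
      (sub_pos.2 hr)
  filter_upwards [hgrowth.eventually_gt_atTop ((m + 1) * r - 1)] with b hbig
  exact le_maxRootModulus_of_aeval_nonpos hm (by linarith)
    (aeval_digitPoly_sub_one_self_neg hr₁ hbig).le

lemma tendsto_maxRootModulus_sub_one_self (hm : 2 ≤ m) :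
    Tendsto (fun b => maxRootModulus m (b - 1) b) atTop (𝓝 (m + 1)) := by
  refine tendsto_order.2 ⟨fun r hr => ?_, fun r hr => ?_⟩
  · have hm' : (2 : ℝ) ≤ m := by exact_mod_cast hm
    obtain ⟨s, hs, hsm⟩ := exists_between (max_lt hr (by linarith : (1 : ℝ) < m + 1))
    filter_upwards [eventually_le_maxRootModulus_sub_one_self hm
      ((le_max_right _ _).trans_lt hs) hsm] with b hb
    exact ((le_max_left _ _).trans_lt hs).trans_le hb
  · exact Eventually.of_forall fun b => (maxRootModulus_le hm _ b).trans_lt hr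

end Limits

/-- Best possible bounds on the stretch factors in `PA(m)`: the supremum of the
maximal root moduli of the digit polynomials `D_{a/b}` over all coprime fractions
`a/b ∈ (0,1)` is `m + 1`, and their infimum is `(m + 1 + √((m+1)² - 8))/2`. -/
theorem stretch_factor_sup_inf (m : ℤ) (hm : 2 ≤ m) :
    sSup {x : ℝ | ∃ a b : ℕ, 1 ≤ a ∧ a < b ∧ Nat.Coprime a b ∧ x = maxRootModulus m a b}
        = (m : ℝ) + 1 ∧
      sInf {x : ℝ | ∃ a b : ℕ, 1 ≤ a ∧ a < b ∧ Nat.Coprime a b ∧ x = maxRootModulus m a b}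
        = ((m : ℝ) + 1 + Real.sqrt (((m : ℝ) + 1) ^ 2 - 8)) / 2 := by
  set S := {x : ℝ | ∃ a b : ℕ, 1 ≤ a ∧ a < b ∧ Nat.Coprime a b ∧ x = maxRootModulus m a b}
  have hmem {a b : ℕ} (ha : 1 ≤ a) (hab : a < b) (hco : Nat.Coprime a b) :
      maxRootModulus m a b ∈ S := ⟨a, b, ha, hab, hco, rfl⟩
  have hne : S.Nonempty := ⟨_, hmem le_rfl one_lt_two (Nat.coprime_one_left 2)⟩
  constructor
  · refine csSup_eq_of_forall_le_of_forall_lt_exists_gt hne ?_ fun w hw => ?_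
    · rintro _ ⟨a, b, -, -, -, rfl⟩
      exact maxRootModulus_le hm a b
    · obtain ⟨b, hwb, hb⟩ := (((tendsto_maxRootModulus_sub_one_self hm).eventually_const_lt hw).and
        (Filter.eventually_ge_atTop 2)).exists
      exact ⟨_, hmem (by omega) (by omega)
        ((Nat.coprime_self_sub_left (by omega)).2 (Nat.coprime_one_left b)), hwb⟩
  · refine csInf_eq_of_forall_ge_of_forall_gt_exists_lt hne ?_ fun w hw => ?_
    · rintro _ ⟨a, b, ha, hab, -, rfl⟩
      exact minStretch_le_maxRootModulus hm hab.le (by omega)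
    · obtain ⟨b, hwb, hb⟩ := (((tendsto_maxRootModulus_one_left hm).eventually_lt_const hw).and
        (Filter.eventually_ge_atTop 2)).exists
      exact ⟨_, hmem le_rfl hb (Nat.coprime_one_left b), hwb⟩
end

section
/- Fix an integer m ≥ 2 and coprime integers a, b with 1 ≤ a < b and b even. Then −1 is a root of the digit polynomial: D_{a/b}(−1) = 0, i.e. (t + 1) divides D_{a/b}(t). (This corresponds to the factor t + 1 appearing in the puncture polynomial of ψ_f exactly when n = |PC(f)| = b + 2 is even.) -/
open Polynomial

/-- Symmetry of the digit coefficients: `c_{b+1-i} = c_i`. -/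
lemma digitCoeff_symm (m : ℤ) (a b i : ℕ) (h1 : 1 ≤ i) (h2 : i ≤ b) :
    digitCoeff m a b (b + 1 - i) = digitCoeff m a b i := by
  unfold digitCoeff
  have hle : i ≤ b + 1 := by omega
  have hc : ((b + 1 - i : ℕ) : ℤ) = (b : ℤ) + 1 - (i : ℤ) := by
    push_cast [Nat.cast_sub hle]; ring
  rw [hc]
  congr 1
  apply propext
  constructor
  · rintro ⟨k, hk1, hk2⟩
    refine ⟨(a : ℤ) - k, ?_, ?_⟩ <;> nlinarith
  · rintro ⟨k, hk1, hk2⟩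
    refine ⟨(a : ℤ) - k, ?_, ?_⟩ <;> nlinarith

/-- If `b` is even, then `-1` is a root of the digit polynomial `D_{a/b}`,
i.e. `t + 1` divides `D_{a/b}(t)`. -/
theorem digitPoly_neg_one_root (m : ℤ) (hm : 2 ≤ m) (a b : ℕ) (ha : 1 ≤ a)
    (hab : a < b) (hcop : Nat.Coprime a b) (hb : Even b) :
    (digitPoly m a b).eval (-1) = 0 ∧ (X + 1) ∣ digitPoly m a b := by
  have hsum : ∑ i ∈ Finset.Icc 1 b,
      digitCoeff m a b i * (-1 : ℤ) ^ (b + 1 - i) = 0 := by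
    apply Finset.sum_involution (fun i _ => b + 1 - i)
    · intro i hi
      simp only [Finset.mem_Icc] at hi
      rw [digitCoeff_symm m a b i hi.1 hi.2]
      have h3 : b + 1 - (b + 1 - i) = i := by omega
      rw [h3]
      have hpow : (-1 : ℤ) ^ (b + 1 - i) * (-1 : ℤ) ^ i = -1 := by
        rw [← pow_add]
        have : b + 1 - i + i = b + 1 := by omega
        rw [this]
        rcases hb with ⟨c, hc⟩
        rw [hc]
        rw [show c + c + 1 = 2 * c + 1 by ring, pow_succ, pow_mul]
        norm_num
      have hi2 : ((-1 : ℤ) ^ i) * ((-1 : ℤ) ^ i) = 1 := by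
        rw [← pow_add, ← two_mul, pow_mul]; norm_num
      have h1 : (-1 : ℤ) ^ (b + 1 - i) = -(-1 : ℤ) ^ i := by
        calc (-1 : ℤ) ^ (b + 1 - i)
            = (-1 : ℤ) ^ (b + 1 - i) * ((-1 : ℤ) ^ i * (-1 : ℤ) ^ i) := by
              rw [hi2]; ring
          _ = ((-1 : ℤ) ^ (b + 1 - i) * (-1 : ℤ) ^ i) * (-1 : ℤ) ^ i := by ring
          _ = -(-1 : ℤ) ^ i := by rw [hpow]; ring
      rw [h1]; ring
    · intro i hi _
      simp only [Finset.mem_Icc] at hi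
      obtain ⟨c, hc⟩ := hb
      omega
    · intro i hi
      simp only [Finset.mem_Icc] at hi ⊢
      omega
    · intro i hi
      simp only [Finset.mem_Icc] at hi
      omega
  have heval : (digitPoly m a b).eval (-1) = 0 := by
    unfold digitPoly
    simp only [eval_sub, eval_add, eval_pow, eval_X, eval_one, eval_finset_sum,
      eval_mul, eval_C]
    rcases hb with ⟨c, hc⟩
    have hpw : (-1 : ℤ) ^ (b + 1) = -1 := by
      rw [hc, show c + c + 1 = 2 * c + 1 by ring, pow_succ, pow_mul]; norm_num
    rw [hpw, hsum]
    ring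
  refine ⟨heval, ?_⟩
  have : (X + 1 : Polynomial ℤ) = X - C (-1) := by
    simp [sub_neg_eq_add]
  rw [this, dvd_iff_isRoot]
  exact heval
end

section
/- Define: a rational y is the right parent of a rational x with 0 < x < 1 if there exists a rational p with 0 ≤ p < x < y ≤ 1 such that p and y are compatible and their Farey sum equals x; a rational y is the left parent of x if there exists a rational r with 0 ≤ y < x < r ≤ 1 such that y and r are compatible and their Farey sum equals x. Let q be a rational with 0 < q < 1 and let (q^L, q^R) be its pair of parents (the unique compatible pair with Farey sum q). Then: for every rational s with q^L < s < q, there exist an integer k ≥ 0 and a finite sequence of rationals s = s_0, s_1, …, s_k = q such that s_{i+1} is the right parent of s_i for every 0 ≤ i < k; dually, for every rational s with q < s < q^R, there is a finite sequence s = s_0, …, s_k = q in which each s_{i+1} is the left parent of s_i. -/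
/-- `y` is the right parent of `x` (for `0 < x < 1`): there is a rational `p` with
`0 ≤ p < x < y ≤ 1` such that `p` and `y` are compatible with Farey sum `x`. -/
def IsRightParent (y x : ℚ) : Prop :=
  ∃ p : ℚ, 0 ≤ p ∧ p < x ∧ x < y ∧ y ≤ 1 ∧ FareyCompatible p y ∧ fareySum p y = x

/-- `y` is the left parent of `x` (for `0 < x < 1`): there is a rational `r` with
`0 ≤ y < x < r ≤ 1` such that `y` and `r` are compatible with Farey sum `x`. -/
def IsLeftParent (y x : ℚ) : Prop :=
  ∃ r : ℚ, 0 ≤ y ∧ y < x ∧ x < r ∧ r ≤ 1 ∧ FareyCompatible y r ∧ fareySum y r = x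


/-! If `u < v` are Farey neighbours, i.e. `v.num * u.den - u.num * v.den = 1`, then `(v.num, v.den)`
and `(u.num, u.den)` form a basis of `ℤ²`, in which every `s` strictly between `u` and `v` has
coprime positive coordinates `(x, y)`. A Bézout relation `x₁ * y - x * y₁ = 1` with `0 < x₁ ≤ x`
and `0 ≤ y₁ < y` splits `(x, y)` into two nonnegative vectors of determinant one, which are the
parents of `s`; so both parents of `s` lie in `[u, v]` and have smaller denominators than `s`.
Hence the right parent of `s` lies in `(s, v]`, and iterating strictly decreases the denominator
until `v` is reached. Applied to the neighbours `(q^L, q)`, and dually to `(q, q^R)`, this gives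
the chains. -/

open Relation

theorem Relation.ReflTransGen.exists_seq {α : Type*} {r : α → α → Prop} {a b : α}
    (h : ReflTransGen r a b) :
    ∃ (k : ℕ) (seq : ℕ → α), seq 0 = a ∧ seq k = b ∧ ∀ i < k, r (seq i) (seq (i + 1)) := by
  induction h with
  | refl => exact ⟨0, fun _ => a, rfl, rfl, by simp⟩
  | @tail b c _ hbc ih =>
    obtain ⟨k, seq, h0, hk, hr⟩ := ih
    refine ⟨k + 1, Function.update seq (k + 1) c, by simp [h0], by simp, fun i hi => ?_⟩
    rcases Nat.lt_succ_iff_lt_or_eq.mp hi with hi | rfl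
    · simpa [Function.update_of_ne, hi.ne, (hi.trans (Nat.lt_succ_self k)).ne] using hr i hi
    · simpa [hk] using hbc

theorem Int.exists_mul_sub_mul_eq_one_of_isCoprime {x y : ℤ} (hx : 0 < x) (hy : 0 < y)
    (h : IsCoprime x y) :
    ∃ x₁ y₁ : ℤ, 0 < x₁ ∧ x₁ ≤ x ∧ 0 ≤ y₁ ∧ y₁ < y ∧ x₁ * y - x * y₁ = 1 := by
  obtain ⟨c, d, hcd⟩ := h
  have hdiv := Int.mul_ediv_add_emod (d - 1) x
  have hr₀ := Int.emod_nonneg (d - 1) hx.ne'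
  have hr₁ := Int.emod_lt_of_pos (d - 1) hx
  have hdet : ((d - 1) % x + 1) * y - x * (-c - (d - 1) / x * y) = 1 := by
    linear_combination hcd + y * hdiv
  refine ⟨(d - 1) % x + 1, -c - (d - 1) / x * y, by omega, by omega, ?_, ?_, hdet⟩
  · nlinarith
  · nlinarith

theorem exists_int_parents_of_between {p₁ q₁ p₂ q₂ a b : ℤ} (hq₁ : 0 < q₁) (hq₂ : 0 < q₂)
    (hD : p₂ * q₁ - p₁ * q₂ = 1) (h₁ : p₁ * b < a * q₁) (h₂ : a * q₂ < p₂ * b)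
    (hab : IsCoprime a b) :
    ∃ nL dL nR dR : ℤ, 0 < dL ∧ 0 < dR ∧ nL + nR = a ∧ dL + dR = b ∧
      nR * dL - nL * dR = 1 ∧ p₁ * dL ≤ nL * q₁ ∧ nR * q₂ ≤ p₂ * dR := by
  -- `(x, y)` are the coordinates of `(a, b)` in the basis `(p₂, q₂), (p₁, q₁)`
  set x := a * q₁ - p₁ * b
  set y := p₂ * b - a * q₂
  have ha : x * p₂ + y * p₁ = a := by linear_combination a * hD
  have hb : x * q₂ + y * q₁ = b := by linear_combination b * hD
  have hxy : IsCoprime x y := by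
    obtain ⟨m, n, hmn⟩ := hab
    exact ⟨m * p₂ + n * q₂, m * p₁ + n * q₁, by linear_combination m * ha + n * hb + hmn⟩
  obtain ⟨x₁, y₁, hx₁, hx₁x, hy₁, hy₁y, hdet⟩ :=
    Int.exists_mul_sub_mul_eq_one_of_isCoprime (by omega) (by omega) hxy
  refine ⟨(x - x₁) * p₂ + (y - y₁) * p₁, (x - x₁) * q₂ + (y - y₁) * q₁,
    x₁ * p₂ + y₁ * p₁, x₁ * q₂ + y₁ * q₁, ?_, ?_, by linear_combination ha,
    by linear_combination hb, ?_, ?_, ?_⟩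
  · nlinarith
  · nlinarith
  · linear_combination (x₁ * y - x * y₁) * hD + hdet
  · linear_combination -(x - x₁) * hD + hx₁x
  · linear_combination -y₁ * hD + hy₁

theorem Rat.num_den_div_of_isCoprime {n d : ℤ} (hd : 0 < d) (h : IsCoprime n d) :
    (n / d : ℚ).num = n ∧ ((n / d : ℚ).den : ℤ) = d := by
  have h' := Int.isCoprime_iff_gcd_eq_one.mp h
  exact ⟨Rat.num_div_eq_of_coprime hd h', Rat.den_div_eq_of_coprime hd h'⟩

def FareyNeighbors (u v : ℚ) : Prop :=
  v.num * u.den - u.num * v.den = 1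

theorem fareyNeighbors_iff {u v : ℚ} : FareyNeighbors u v ↔ FareyCompatible u v ∧ u < v := by
  rw [FareyNeighbors, FareyCompatible, Rat.lt_iff, abs_eq zero_le_one]
  omega

namespace FareyNeighbors

variable {u v : ℚ}

theorem num_den_fareySum (h : FareyNeighbors u v) :
    (fareySum u v).num = u.num + v.num ∧ ((fareySum u v).den : ℤ) = u.den + v.den := by
  have hsum : fareySum u v = ((u.num + v.num : ℤ) : ℚ) / ((u.den + v.den : ℤ) : ℚ) := by
    rw [fareySum]; push_cast; rfl
  unfold FareyNeighbors at h
  rw [hsum]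
  exact Rat.num_den_div_of_isCoprime (by positivity) ⟨u.den, -u.num, by linear_combination h⟩

theorem fareySum_left (h : FareyNeighbors u v) : FareyNeighbors u (fareySum u v) := by
  obtain ⟨hn, hd⟩ := h.num_den_fareySum
  unfold FareyNeighbors at h ⊢
  rw [hn, hd]
  linear_combination h

theorem fareySum_right (h : FareyNeighbors u v) : FareyNeighbors (fareySum u v) v := by
  obtain ⟨hn, hd⟩ := h.num_den_fareySum
  unfold FareyNeighbors at h ⊢
  rw [hn, hd]
  linear_combination h

theorem lt (h : FareyNeighbors u v) : u < v :=
  (fareyNeighbors_iff.mp h).2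

theorem exists_parents {s : ℚ} (h : FareyNeighbors u v) (hus : u < s) (hsv : s < v) :
    ∃ sL sR : ℚ, u ≤ sL ∧ sR ≤ v ∧ FareyNeighbors sL sR ∧ fareySum sL sR = s ∧
      sL.den < s.den ∧ sR.den < s.den := by
  obtain ⟨nL, dL, nR, dR, hdL, hdR, hn, hd, hdet, hL, hR⟩ :=
    exists_int_parents_of_between (by positivity) (by positivity) h ((Rat.lt_iff _ _).mp hus)
      ((Rat.lt_iff _ _).mp hsv) s.isCoprime_num_den
  obtain ⟨hnumL, hdenL⟩ :=
    Rat.num_den_div_of_isCoprime (n := nL) hdL ⟨-dR, nR, by linear_combination hdet⟩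
  obtain ⟨hnumR, hdenR⟩ :=
    Rat.num_den_div_of_isCoprime (n := nR) hdR ⟨dL, -nL, by linear_combination hdet⟩
  refine ⟨nL / dL, nR / dR, ?_, ?_, ?_, ?_, by omega, by omega⟩
  · rw [Rat.le_iff, hnumL, hdenL]
    exact hL
  · rw [Rat.le_iff, hnumR, hdenR]
    exact hR
  · rw [FareyNeighbors, hnumL, hdenL, hnumR, hdenR]
    exact hdet
  · have hdenL' : ((nL / dL : ℚ).den : ℚ) = dL := by exact_mod_cast hdenL
    have hdenR' : ((nR / dR : ℚ).den : ℚ) = dR := by exact_mod_cast hdenR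
    have hs : (s.den : ℚ) = dL + dR := by exact_mod_cast hd.symm
    rw [fareySum, hnumL, hnumR, hdenL', hdenR', ← Rat.num_div_den s, ← hn, hs]
    push_cast
    rfl

end FareyNeighbors

theorem reflTransGen_isRightParent {u v s : ℚ} (h : FareyNeighbors u v) (hu : 0 ≤ u) (hv : v ≤ 1)
    (hus : u < s) (hsv : s < v) : ReflTransGen (fun x y => IsRightParent y x) s v := by
  induction hn : s.den using Nat.strong_induction_on generalizing s with
  | _ n ih =>
  obtain ⟨sL, sR, huL, hRv, hLR, rfl, -, hdR⟩ := h.exists_parents hus hsv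
  have hsR : fareySum sL sR < sR := hLR.fareySum_right.lt
  have hstep : IsRightParent sR (fareySum sL sR) :=
    ⟨sL, hu.trans huL, hLR.fareySum_left.lt, hsR, hRv.trans hv, (fareyNeighbors_iff.mp hLR).1, rfl⟩
  rcases hRv.eq_or_lt with rfl | hRv
  · exact .single hstep
  · exact .head hstep (ih _ (hn ▸ hdR) (hus.trans hsR) hRv rfl)

theorem reflTransGen_isLeftParent {u v s : ℚ} (h : FareyNeighbors u v) (hu : 0 ≤ u) (hv : v ≤ 1)
    (hus : u < s) (hsv : s < v) : ReflTransGen (fun x y => IsLeftParent y x) s u := by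
  induction hn : s.den using Nat.strong_induction_on generalizing s with
  | _ n ih =>
  obtain ⟨sL, sR, huL, hRv, hLR, rfl, hdL, -⟩ := h.exists_parents hus hsv
  have hLs : sL < fareySum sL sR := hLR.fareySum_left.lt
  have hstep : IsLeftParent sL (fareySum sL sR) :=
    ⟨sR, hu.trans huL, hLs, hLR.fareySum_right.lt, hRv.trans hv, (fareyNeighbors_iff.mp hLR).1, rfl⟩
  rcases huL.eq_or_lt with rfl | huL
  · exact .single hstep
  · exact .head hstep (ih _ (hn ▸ hdL) huL (hLs.trans hsv) rfl)

/-- Every rational strictly between `q^L` and `q` is connected to `q` by a finite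
chain of right parents, and every rational strictly between `q` and `q^R` is
connected to `q` by a finite chain of left parents. -/
theorem parent_chain (q qL qR : ℚ) (h0 : 0 < q) (h1 : q < 1)
    (hL0 : 0 ≤ qL) (hLq : qL < q) (hqR : q < qR) (hR1 : qR ≤ 1)
    (hcompat : FareyCompatible qL qR) (hsum : fareySum qL qR = q) :
    (∀ s : ℚ, qL < s → s < q →
      ∃ (k : ℕ) (seq : ℕ → ℚ), seq 0 = s ∧ seq k = q ∧
        ∀ i < k, IsRightParent (seq (i + 1)) (seq i)) ∧
    (∀ s : ℚ, q < s → s < qR →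
      ∃ (k : ℕ) (seq : ℕ → ℚ), seq 0 = s ∧ seq k = q ∧
        ∀ i < k, IsLeftParent (seq (i + 1)) (seq i)) := by
  have hN : FareyNeighbors qL qR := fareyNeighbors_iff.mpr ⟨hcompat, hLq.trans hqR⟩
  subst hsum
  exact ⟨fun s hLs hsq =>
      (reflTransGen_isRightParent hN.fareySum_left hL0 h1.le hLs hsq).exists_seq,
    fun s hqs hsR => (reflTransGen_isLeftParent hN.fareySum_right h0.le hR1 hqs hsR).exists_seq⟩
end
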